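/- arXiv:1811.06419 — 8 statements merged into one kernel-verified Lean document; each statement's English description precedes it below -/
import Mathlib

section
/- Let m ≥ 2 and let a_1,…,a_m ≥ 0 with Σ_{i=1}^m a_i = 1. Then ((m−1)/m)·[1 − (1 − (2m/(m−1)) Σ_{1≤i<j≤m} a_i a_j)^{1/2}] ≤ 1 − max_{1≤i≤m} a_i. (The quantity under the square root is nonnegative, since 2 Σ_{i<j} a_i a_j = 1 − Σ_i a_i² ≤ (m−1)/m.) -/
open Finset

theorem prob_vector_lower_bound_one_sub_max
    (m : ℕ) (hm : 2 ≤ m) (a : Fin m → ℝ)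
    (ha : ∀ i, 0 ≤ a i) (hsum : ∑ i, a i = 1) :
    ((m : ℝ) - 1) / m *
        (1 - Real.sqrt (1 - (2 * m / ((m : ℝ) - 1)) *
          ∑ i : Fin m, ∑ j : Fin m, (if i < j then a i * a j else 0))) ≤
      1 - (⨆ i, a i) := by
  have hm2 : (2:ℝ) ≤ (m:ℝ) := by exact_mod_cast hm
  have hm1pos : (0:ℝ) < (m:ℝ) - 1 := by linarith
  have hmpos : (0:ℝ) < (m:ℝ) := by linarith
  have hne : Nonempty (Fin m) := ⟨⟨0, by omega⟩⟩
  obtain ⟨k, hk⟩ := Finite.exists_max a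
  have hM : (⨆ i, a i) = a k :=
    le_antisymm (ciSup_le hk) (le_ciSup (Set.Finite.bddAbove (Set.finite_range a)) k)
  set M := a k with hMdef
  set S : ℝ := ∑ i : Fin m, ∑ j : Fin m, (if i < j then a i * a j else 0) with hSdef
  set Q : ℝ := ∑ i, (a i)^2 with hQdef
  -- identity: 1 = Q + 2S
  have hQS : 1 = Q + 2 * S := by
    have h1 : (1:ℝ) = (∑ i, a i) * (∑ j, a j) := by rw [hsum]; ring
    rw [Finset.sum_mul_sum] at h1
    have h2 : ∀ i j : Fin m, a i * a j =
        (if i = j then a i * a j else 0) + (if i < j then a i * a j else 0)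
          + (if j < i then a i * a j else 0) := by
      intro i j
      rcases lt_trichotomy i j with h | h | h
      · simp [h, h.ne, asymm h]
      · simp [h, lt_irrefl]
      · simp [h, h.ne', asymm h]
    rw [Finset.sum_congr rfl (fun i _ => Finset.sum_congr rfl (fun j _ => h2 i j))] at h1
    simp only [Finset.sum_add_distrib] at h1
    have hdiag : ∑ i : Fin m, ∑ j : Fin m, (if i = j then a i * a j else 0) = Q := by
      rw [hQdef]
      refine Finset.sum_congr rfl fun i _ => ?_
      simp [Finset.sum_ite_eq, sq]
    have hswap : ∑ i : Fin m, ∑ j : Fin m, (if j < i then a i * a j else 0) = S := by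
      rw [hSdef, Finset.sum_comm]
      refine Finset.sum_congr rfl fun i _ => Finset.sum_congr rfl fun j _ => ?_
      rw [mul_comm]
    rw [hdiag, hswap] at h1
    rw [h1]; ring
  -- Cauchy-Schwarz on the rest
  have hsplit : Q = M^2 + ∑ i ∈ Finset.univ.erase k, (a i)^2 := by
    rw [hQdef, ← Finset.add_sum_erase _ _ (Finset.mem_univ k)]
  have hrest : ∑ i ∈ Finset.univ.erase k, a i = 1 - M := by
    have := Finset.add_sum_erase Finset.univ a (Finset.mem_univ k)
    rw [hsum] at this
    linarith
  have hcard : (#(Finset.univ.erase k) : ℝ) = (m:ℝ) - 1 := by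
    rw [Finset.card_erase_of_mem (Finset.mem_univ k)]
    simp
    rw [Nat.cast_sub (by omega)]
    simp
  have hcs : (1 - M)^2 ≤ ((m:ℝ) - 1) * ∑ i ∈ Finset.univ.erase k, (a i)^2 := by
    have := sq_sum_le_card_mul_sum_sq (s := Finset.univ.erase k) (f := a)
    rw [hrest, hcard] at this
    exact this
  have hQb : ((m:ℝ) - 1) * M^2 + (1 - M)^2 ≤ ((m:ℝ) - 1) * Q := by
    rw [hsplit]; nlinarith [hcs]
  -- key polynomial inequality
  have key : ((m:ℝ) * M - 1)^2 ≤ ((m:ℝ) - 1) * ((m:ℝ) * Q - 1) := by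
    nlinarith [mul_le_mul_of_nonneg_left hQb hmpos.le]
  set X : ℝ := 1 - (2 * (m:ℝ) / ((m:ℝ) - 1)) * S with hXdef
  have hX : X = ((m:ℝ) * Q - 1) / ((m:ℝ) - 1) := by
    rw [hXdef]
    have hS : 2 * S = 1 - Q := by linarith
    field_simp
    nlinarith [hS]
  set t : ℝ := ((m:ℝ) * M - 1) / ((m:ℝ) - 1) with htdef
  have hsqrt : t ≤ Real.sqrt X := by
    apply Real.le_sqrt_of_sq_le
    rw [hX, htdef, div_pow, div_le_div_iff₀ (by positivity) hm1pos]
    nlinarith [key, hm1pos.le, sq_nonneg ((m:ℝ)*M - 1)]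
  have h2 : ((m:ℝ) - 1) / m * (1 - t) = 1 - M := by
    rw [htdef]; field_simp; ring
  have h1 : ((m:ℝ) - 1) / m * (1 - Real.sqrt X) ≤ ((m:ℝ) - 1) / m * (1 - t) :=
    mul_le_mul_of_nonneg_left (by linarith) (by positivity)
  rw [hM]
  calc ((m:ℝ) - 1) / m * (1 - Real.sqrt X) ≤ ((m:ℝ) - 1) / m * (1 - t) := h1
    _ = 1 - M := h2
end

section
/- Let m ≥ 3 and let a_1,…,a_m ≥ 0 with Σ_{i=1}^m a_i = 1. Then 2 Σ_{1≤i<j≤m} a_i a_j ≤ −(1/2) Σ_{i=1}^m a_i log₂ a_i, where log₂ denotes the base-2 logarithm and the convention a log₂ a = 0 when a = 0 is used. -/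
open Finset
open Real

lemma logA (v : ℝ) (hv : 0 ≤ v) : Real.log (1+v) ≤ v - v^2/2 + v^3/3 := by
  have key : MonotoneOn (fun t : ℝ => t - t^2/2 + t^3/3 - Real.log (1+t)) (Set.Ici 0) := by
    apply monotoneOn_of_deriv_nonneg (convex_Ici 0)
    · apply ContinuousOn.sub
      · fun_prop
      · apply ContinuousOn.log (by fun_prop)
        intro x hx; simp at hx; nlinarith
    · apply DifferentiableOn.sub
      · fun_prop
      · apply DifferentiableOn.log (by fun_prop)
        intro x hx
        simp [interior_Ici] at hx; nlinarith
    · intro x hx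
      simp [interior_Ici] at hx
      have h1 : (0:ℝ) < 1 + x := by linarith
      have hd : HasDerivAt (fun t : ℝ => t - t^2/2 + t^3/3 - Real.log (1+t))
          (1 - 2*x/2 + 3*x^2/3 - (1/(1+x))) x := by
        have hl : HasDerivAt (fun t : ℝ => Real.log (1+t)) (1/(1+x)) x := by
          have : HasDerivAt (fun t : ℝ => 1+t) 1 x := by
            simpa using (hasDerivAt_id x).const_add 1
          simpa using this.log h1.ne'
        have hp : HasDerivAt (fun t : ℝ => t - t^2/2 + t^3/3) (1 - 2*x/2 + 3*x^2/3) x := by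
          have h1' : HasDerivAt (fun t : ℝ => t) 1 x := hasDerivAt_id x
          have h2' : HasDerivAt (fun t : ℝ => t^2/2) (2*x/2) x := by
            simpa using ((hasDerivAt_pow 2 x).div_const 2)
          have h3' : HasDerivAt (fun t : ℝ => t^3/3) (3*x^2/3) x := by
            simpa using ((hasDerivAt_pow 3 x).div_const 3)
          exact (h1'.sub h2').add h3'
        exact hp.sub hl
      rw [hd.deriv]
      rw [sub_nonneg, div_le_iff₀ h1]
      nlinarith
  have h0 := key (Set.self_mem_Ici) (Set.mem_Ici.2 hv) hv
  simp at h0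
  linarith

lemma logB (v : ℝ) (hv : 0 ≤ v) (hv1 : v < 1) : Real.log (1-v) ≤ -(v + v^2/2 + v^3/3) := by
  have key : MonotoneOn (fun t : ℝ => -(t + t^2/2 + t^3/3) - Real.log (1-t)) (Set.Ico 0 1) := by
    apply monotoneOn_of_deriv_nonneg (convex_Ico 0 1)
    · apply ContinuousOn.sub
      · fun_prop
      · apply ContinuousOn.log (by fun_prop)
        intro x hx; simp [Set.mem_Ico] at hx; nlinarith [hx.2]
    · apply DifferentiableOn.sub
      · fun_prop
      · apply DifferentiableOn.log (by fun_prop)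
        intro x hx
        rw [interior_Ico] at hx; simp [Set.mem_Ioo] at hx; nlinarith [hx.2]
    · intro x hx
      rw [interior_Ico] at hx; simp [Set.mem_Ioo] at hx
      have h1 : (0:ℝ) < 1 - x := by linarith
      have hd : HasDerivAt (fun t : ℝ => -(t + t^2/2 + t^3/3) - Real.log (1-t))
          (-(1 + 2*x/2 + 3*x^2/3) - (-1/(1-x))) x := by
        have hl : HasDerivAt (fun t : ℝ => Real.log (1-t)) (-1/(1-x)) x := by
          have : HasDerivAt (fun t : ℝ => 1-t) (-1) x := by
            simpa using (hasDerivAt_id x).const_sub 1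
          simpa using this.log h1.ne'
        have hp : HasDerivAt (fun t : ℝ => -(t + t^2/2 + t^3/3)) (-(1 + 2*x/2 + 3*x^2/3)) x := by
          have h1' : HasDerivAt (fun t : ℝ => t) 1 x := hasDerivAt_id x
          have h2' : HasDerivAt (fun t : ℝ => t^2/2) (2*x/2) x := by
            simpa using ((hasDerivAt_pow 2 x).div_const 2)
          have h3' : HasDerivAt (fun t : ℝ => t^3/3) (3*x^2/3) x := by
            simpa using ((hasDerivAt_pow 3 x).div_const 3)
          exact ((h1'.add h2').add h3').neg
        exact hp.sub hl
      rw [hd.deriv]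
      have h2 : -(1 + 2*x/2 + 3*x^2/3) - (-1/(1-x)) = x^3/(1-x) := by
        field_simp; ring
      rw [h2]
      exact div_nonneg (by nlinarith [hx.1]) h1.le
  have h0 := key (Set.mem_Ico.2 ⟨le_refl 0, one_pos⟩) (Set.mem_Ico.2 ⟨hv, hv1⟩) hv
  simp at h0
  linarith

lemma keyIneq (v : ℝ) (h0 : 0 ≤ v) (h1 : v < 1) :
    (1+v) * Real.log (1+v) + (1-v) * Real.log (1-v) ≤ 2 * Real.log 2 * v^2 := by
  have l2a : 0.6931471803 < Real.log 2 := Real.log_two_gt_d9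
  have l2b : Real.log 2 < 0.6931471808 := Real.log_two_lt_d9
  rcases le_or_gt v (2/3) with hv | hv
  · have hA := logA v h0
    have hB := logB v h0 h1
    have c1 : (1+v) * Real.log (1+v) ≤ (1+v) * (v - v^2/2 + v^3/3) :=
      mul_le_mul_of_nonneg_left hA (by linarith)
    have c2 : (1-v) * Real.log (1-v) ≤ (1-v) * (-(v + v^2/2 + v^3/3)) :=
      mul_le_mul_of_nonneg_left hB (by linarith)
    have hsq : v^2 ≤ 4/9 := by nlinarith
    have hkey : (2/3) * v^4 ≤ (2*Real.log 2 - 1) * v^2 := by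
      have h1' : (2/3) * v^4 = ((2/3)*v^2) * v^2 := by ring
      rw [h1']
      apply mul_le_mul_of_nonneg_right _ (sq_nonneg v)
      nlinarith
    nlinarith
  · set e : ℝ := 1 - v with he
    have he0 : 0 < e := by simp [he]; linarith
    have he1 : e < 1/3 := by simp [he]; linarith
    -- log(1+v) = log(2 - e) ≤ log 2 - e/2
    have c1 : Real.log (1+v) ≤ Real.log 2 - e/2 := by
      have : Real.log ((1+v)/2) ≤ (1+v)/2 - 1 := Real.log_le_sub_one_of_pos (by linarith)
      rw [Real.log_div (by linarith) (by norm_num)] at this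
      linarith
    -- log 3 ≥ log 2 + 1/3
    have l3 : Real.log 2 + 1/3 ≤ Real.log 3 := by
      have h32 : Real.log (3/2) = Real.log 3 - Real.log 2 :=
        Real.log_div (by norm_num) (by norm_num)
      have : Real.log (2/3) ≤ 2/3 - 1 := Real.log_le_sub_one_of_pos (by norm_num)
      have h23 : Real.log (2/3) = Real.log 2 - Real.log 3 :=
        Real.log_div (by norm_num) (by norm_num)
      linarith
    -- log e ≤ 3e - 1 - log 3
    have c2 : Real.log e ≤ 3*e - 1 - Real.log 3 := by
      have : Real.log (3*e) ≤ 3*e - 1 := Real.log_le_sub_one_of_pos (by linarith)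
      rw [Real.log_mul (by norm_num) he0.ne'] at this
      linarith
    have b1 : (1+v) * Real.log (1+v) ≤ (2-e) * (Real.log 2 - e/2) := by
      have hv2 : (1:ℝ)+v = 2 - e := by simp [he]; ring
      rw [hv2]
      exact mul_le_mul_of_nonneg_left (by simpa [hv2] using c1) (by linarith)
    have b2 : (1-v) * Real.log (1-v) ≤ e * (3*e - 1 - Real.log 3) := by
      have : (1:ℝ)-v = e := rfl
      rw [this]
      exact mul_le_mul_of_nonneg_left c2 he0.le
    have hv2 : v = 1 - e := by simp [he]
    have h35 : (0:ℝ) < 3.5 - 2*Real.log 2 := by linarith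
    have step : 3*Real.log 2 - Real.log 3 - 2 + (3.5 - 2*Real.log 2)*e ≤ 0 := by
      have := mul_le_mul_of_nonneg_left he1.le h35.le
      nlinarith
    have fin : e * (3*Real.log 2 - Real.log 3 - 2 + (3.5 - 2*Real.log 2)*e) ≤ 0 :=
      mul_nonpos_of_nonneg_of_nonpos he0.le step
    nlinarith [fin, b1, b2]

lemma entK (b : ℝ) (hb : 1/2 ≤ b) (hb1 : b ≤ 1) :
    4*b*(1-b) ≤ -(b * Real.logb 2 b + (1-b) * Real.logb 2 (1-b)) := by
  rcases eq_or_lt_of_le hb1 with h1 | h1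
  · subst h1; simp
  have hb0 : 0 < b := by linarith
  have hc0 : 0 < 1 - b := by linarith
  have l2 : 0 < Real.log 2 := Real.log_pos (by norm_num)
  have hk := keyIneq (2*b-1) (by linarith) (by linarith)
  have e1 : Real.log (1+(2*b-1)) = Real.log 2 + Real.log b := by
    rw [show (1:ℝ)+(2*b-1) = 2*b by ring, Real.log_mul two_ne_zero hb0.ne']
  have e2 : Real.log (1-(2*b-1)) = Real.log 2 + Real.log (1-b) := by
    rw [show (1:ℝ)-(2*b-1) = 2*(1-b) by ring, Real.log_mul two_ne_zero hc0.ne']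
  rw [e1, e2] at hk
  rw [Real.logb, Real.logb]
  rw [show -(b * (Real.log b / Real.log 2) + (1-b) * (Real.log (1-b) / Real.log 2))
      = (-(b * Real.log b + (1-b) * Real.log (1-b))) / Real.log 2 by field_simp; try ring]
  rw [le_div_iff₀ l2]
  nlinarith [hk]

lemma P1 (x : ℝ) (hx : 0 ≤ x) (hx2 : x ≤ 1/2) :
    x - x^2 ≤ -(1/2) * (x * Real.logb 2 x) := by
  rcases eq_or_lt_of_le hx with h0 | h0
  · simp [← h0]
  have l2 : 0 < Real.log 2 := Real.log_pos (by norm_num)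
  have l2b : Real.log 2 < 0.6931471808 := Real.log_two_lt_d9
  have hl : Real.log (2*x) ≤ 2*x - 1 := Real.log_le_sub_one_of_pos (by linarith)
  rw [Real.log_mul two_ne_zero h0.ne'] at hl
  have key : 2*Real.log 2*(x - x^2) ≤ -(x * Real.log x) := by
    have h1 : -Real.log x ≥ Real.log 2 + 1 - 2*x := by linarith
    have h2 : Real.log 2 + 1 - 2*x ≥ 2*Real.log 2*(1-x) := by nlinarith
    nlinarith [mul_le_mul_of_nonneg_left (by linarith : 2*Real.log 2*(1-x) ≤ -Real.log x) h0.le]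
  rw [Real.logb]
  rw [show -(1/2:ℝ) * (x * (Real.log x / Real.log 2)) = (-(x * Real.log x))/(2*Real.log 2) by
    field_simp; try ring]
  rw [le_div_iff₀ (by linarith)]
  linarith

lemma P2 (c x : ℝ) (hc : c ≤ 1/2) (hx0 : 0 ≤ x) (hxc : x ≤ c) :
    x - x^2 + x * (-(1/2) * Real.logb 2 c - 1 + c) ≤ -(1/2) * (x * Real.logb 2 x) := by
  rcases eq_or_lt_of_le hx0 with h0 | h0
  · simp [← h0]
  have hc0 : 0 < c := lt_of_lt_of_le h0 hxc
  have l2 : 0 < Real.log 2 := Real.log_pos (by norm_num)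
  have l2b : Real.log 2 < 0.6931471808 := Real.log_two_lt_d9
  have hl : Real.log (x/c) ≤ x/c - 1 := Real.log_le_sub_one_of_pos (by positivity)
  rw [Real.log_div h0.ne' hc0.ne'] at hl
  -- log c - log x ≥ 2 log 2 * (c - x)
  have key : 2*Real.log 2*(c - x) ≤ Real.log c - Real.log x := by
    have h1 : Real.log c - Real.log x ≥ 1 - x/c := by linarith
    have h2 : 1 - x/c = (c-x)/c := by field_simp
    have h3 : (c-x)/c ≥ 2*(c-x) := by
      rw [ge_iff_le, le_div_iff₀ hc0]
      nlinarith
    nlinarith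
  have key2 : x * (2*Real.log 2*(c - x)) ≤ x * (Real.log c - Real.log x) :=
    mul_le_mul_of_nonneg_left key h0.le
  rw [Real.logb, Real.logb]
  rw [show -(1/2:ℝ) * (x * (Real.log x / Real.log 2)) = (-(x * Real.log x))/(2*Real.log 2) by
    field_simp; try ring,
    show x - x^2 + x * (-(1/2) * (Real.log c / Real.log 2) - 1 + c)
      = (-(x*Real.log c) + (2*Real.log 2)*(x - x^2 + x*(c-1)))/(2*Real.log 2) by
    field_simp; try ring]
  rw [div_le_div_iff_of_pos_right (by linarith)]
  nlinarith [key2]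

theorem prob_vector_two_sum_pairwise_le_half_entropy
    (m : ℕ) (hm : 3 ≤ m) (a : Fin m → ℝ)
    (ha : ∀ i, 0 ≤ a i) (hsum : ∑ i, a i = 1) :
    2 * ∑ i : Fin m, ∑ j : Fin m, (if i < j then a i * a j else 0) ≤
      -(1 / 2) * ∑ i, a i * Real.logb 2 (a i) := by
  -- Step 1: the double sum equals (1 - ∑ aᵢ²)/2
  have split : ∀ i j : Fin m, a i * a j =
      (if i < j then a i * a j else 0) + (if j < i then a i * a j else 0)
      + (if i = j then a i * a j else 0) := by
    intro i j
    rcases lt_trichotomy i j with h | h | h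
    · simp [h, asymm h, h.ne]
    · simp [h, lt_irrefl]
    · simp [h, asymm h, h.ne']
  have expand : (1:ℝ) = ∑ i : Fin m, ∑ j : Fin m, a i * a j := by
    rw [← Finset.sum_mul_sum, hsum, one_mul]
  have hswap : ∑ i : Fin m, ∑ j : Fin m, (if j < i then a i * a j else 0)
      = ∑ i : Fin m, ∑ j : Fin m, (if i < j then a i * a j else 0) := by
    rw [Finset.sum_comm]
    refine Finset.sum_congr rfl fun i _ => Finset.sum_congr rfl fun j _ => ?_
    rcases lt_or_ge i j with h | h
    · simp [h, mul_comm]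
    · simp [not_lt_of_ge h]
  have hdiag : ∑ i : Fin m, ∑ j : Fin m, (if i = j then a i * a j else 0)
      = ∑ i : Fin m, (a i)^2 := by
    refine Finset.sum_congr rfl fun i _ => ?_
    rw [Finset.sum_ite_eq (Finset.univ) i (fun j => a i * a j)]
    simp [sq]
  have hid : (1:ℝ) = 2 * (∑ i : Fin m, ∑ j : Fin m, (if i < j then a i * a j else 0))
      + ∑ i : Fin m, (a i)^2 := by
    calc (1:ℝ) = ∑ i : Fin m, ∑ j : Fin m, a i * a j := expand
    _ = ∑ i : Fin m, ∑ j : Fin m, ((if i < j then a i * a j else 0)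
        + (if j < i then a i * a j else 0) + (if i = j then a i * a j else 0)) := by
        exact Finset.sum_congr rfl fun i _ => Finset.sum_congr rfl fun j _ => split i j
    _ = (∑ i : Fin m, ∑ j : Fin m, (if i < j then a i * a j else 0))
        + (∑ i : Fin m, ∑ j : Fin m, (if j < i then a i * a j else 0))
        + ∑ i : Fin m, ∑ j : Fin m, (if i = j then a i * a j else 0) := by
        simp [Finset.sum_add_distrib]
    _ = 2 * (∑ i : Fin m, ∑ j : Fin m, (if i < j then a i * a j else 0))
        + ∑ i : Fin m, (a i)^2 := by rw [hswap, hdiag]; ring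
  -- Step 2: reduce to the sum inequality
  suffices h : ∑ i : Fin m, (a i - (a i)^2)
      ≤ ∑ i : Fin m, (-(1/2) * (a i * Real.logb 2 (a i))) by
    have e1 : ∑ i : Fin m, (a i - (a i)^2) = 1 - ∑ i : Fin m, (a i)^2 := by
      rw [Finset.sum_sub_distrib, hsum]
    have e2 : ∑ i : Fin m, (-(1/2) * (a i * Real.logb 2 (a i)))
        = -(1/2) * ∑ i, a i * Real.logb 2 (a i) := by
      rw [Finset.mul_sum]
    linarith
  by_cases hcase : ∀ i, a i ≤ 1/2
  · exact Finset.sum_le_sum fun i _ => P1 (a i) (ha i) (hcase i)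
  · push_neg at hcase
    obtain ⟨k, hk⟩ := hcase
    set c : ℝ := 1 - a k with hc
    have hsum' : ∑ i ∈ Finset.univ.erase k, a i = c := by
      have := Finset.add_sum_erase Finset.univ a (Finset.mem_univ k)
      rw [hsum] at this
      linarith
    have hc2 : c ≤ 1/2 := by rw [hc]; linarith
    have hc0 : 0 ≤ c := by
      have : a k ≤ ∑ i, a i := Finset.single_le_sum (fun i _ => ha i) (Finset.mem_univ k)
      rw [hsum] at this; rw [hc]; linarith
    have hle : ∀ i ∈ Finset.univ.erase k, a i ≤ c := by
      intro i hi
      rw [← hsum']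
      exact Finset.single_le_sum (fun j _ => ha j) hi
    set w : ℝ := -(1/2) * Real.logb 2 c - 1 + c with hw
    have step1 : ∀ i ∈ Finset.univ.erase k, a i - (a i)^2 + a i * w
        ≤ -(1/2) * (a i * Real.logb 2 (a i)) := fun i hi =>
      P2 c (a i) hc2 (ha i) (hle i hi)
    have stepk : a k - (a k)^2 - c * w ≤ -(1/2) * (a k * Real.logb 2 (a k)) := by
      have hK := entK (a k) (le_of_lt hk) (by rw [hc] at hc0; linarith)
      rw [hw, hc]
      nlinarith [hK]
    calc ∑ i : Fin m, (a i - (a i)^2)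
        = (a k - (a k)^2) + ∑ i ∈ Finset.univ.erase k, (a i - (a i)^2) :=
          (Finset.add_sum_erase Finset.univ _ (Finset.mem_univ k)).symm
      _ = (a k - (a k)^2 - c * w)
          + ∑ i ∈ Finset.univ.erase k, ((a i - (a i)^2) + a i * w) := by
          rw [Finset.sum_add_distrib, ← Finset.sum_mul, hsum']; ring
      _ ≤ (-(1/2) * (a k * Real.logb 2 (a k)))
          + ∑ i ∈ Finset.univ.erase k, (-(1/2) * (a i * Real.logb 2 (a i))) := by
          exact add_le_add stepk (Finset.sum_le_sum step1)
      _ = ∑ i : Fin m, (-(1/2) * (a i * Real.logb 2 (a i))) :=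
          Finset.add_sum_erase Finset.univ
            (fun i => -(1/2) * (a i * Real.logb 2 (a i))) (Finset.mem_univ k)
end

section
/- Let m ≥ 3 and let a_1,…,a_m ≥ 0 with Σ_{i=1}^m a_i = 1. Then Σ_{i=1}^m a_i (2 − 2a_i + log₂ a_i) ≤ 0, with the convention that the i-th summand is 0 when a_i = 0. -/
/-!
Write `g x = 2 - 2x + log₂ x`. On `(0, 1/2]` the function `g` is increasing and vanishes at `1/2`,
so coordinates at most `1/2` contribute nonpositive terms. At most one coordinate `t` exceeds `1/2`;
the others lie below `1 - t`, so monotonicity of `g` bounds their total contribution by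
`(1 - t) g(1 - t)`, which reduces the claim to two coordinates. That case is the inequality
`H(p) ≥ 4 log 2 · p (1 - p)` for the binary entropy: expanding `-log x / (1 - x) = ∑ (1 - x)ⁿ / (n + 1)`
gives `H(p) = p (1 - p) ∑ (pⁿ + (1 - p)ⁿ) / (n + 1)`, and `pⁿ + (1 - p)ⁿ ≥ 2 (1/2)ⁿ` by convexity,
the right-hand side summing to `4 log 2 · p (1 - p)` by the same expansion at `x = 1/2`.
-/

open Real Finset

theorem Real.hasSum_pow_div_neg_log {x : ℝ} (hx₀ : 0 < x) (hx₂ : x < 2) :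
    HasSum (fun n : ℕ => (1 - x) ^ (n + 1) / (n + 1)) (-log x) := by
  simpa using hasSum_pow_div_log_of_abs_lt_one (x := 1 - x) (by rw [abs_lt]; constructor <;> linarith)

theorem Real.four_mul_log_two_mul_le_binEntropy {p : ℝ} (hp₀ : 0 ≤ p) (hp₁ : p ≤ 1) :
    4 * log 2 * p * (1 - p) ≤ binEntropy p := by
  rcases hp₀.eq_or_lt with rfl | hp₀
  · simp
  rcases hp₁.eq_or_lt with rfl | hp₁
  · simp
  set q := 1 - p with hq
  have hq₀ : 0 < q := by linarith
  have hentropy : HasSum (fun n : ℕ => p * q * (p ^ n + q ^ n) / (n + 1)) (binEntropy p) := by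
    have h := ((hasSum_pow_div_neg_log hp₀ (by linarith)).mul_left p).add
      ((hasSum_pow_div_neg_log hq₀ (by linarith)).mul_left q)
    rw [binEntropy, log_inv, log_inv, ← hq]
    refine h.congr_fun fun n => ?_
    rw [← hq, show 1 - q = p by ring]
    ring
  have hlog : HasSum (fun n : ℕ => p * q * (2 * (1 / 2) ^ n) / (n + 1)) (4 * p * q * log 2) := by
    have h := (hasSum_pow_div_neg_log (x := 1 / 2) (by norm_num) (by norm_num)).mul_left (4 * p * q)
    rw [one_div, log_inv, neg_neg] at h
    refine h.congr_fun fun n => ?_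
    ring
  have hterm (n : ℕ) : p * q * (2 * (1 / 2) ^ n) / (n + 1) ≤ p * q * (p ^ n + q ^ n) / (n + 1) := by
    have hconvex := (convexOn_pow n).2 (Set.mem_Ici.2 hp₀.le) (Set.mem_Ici.2 hq₀.le)
      (by norm_num : (0 : ℝ) ≤ 1 / 2) (by norm_num : (0 : ℝ) ≤ 1 / 2) (by norm_num)
    have hmid : (1 / 2 : ℝ) • p + (1 / 2 : ℝ) • q = 1 / 2 := by simp only [smul_eq_mul, hq]; ring
    rw [hmid, smul_eq_mul, smul_eq_mul] at hconvex
    gcongr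
    linarith
  linarith [hasSum_le hterm hlog hentropy]

namespace ProbVector

noncomputable def g (x : ℝ) : ℝ := 2 - 2 * x + logb 2 x

theorem g_half : g (1 / 2) = 0 := by
  rw [g, one_div, logb_inv, logb_self_eq_one one_lt_two]; norm_num

theorem g_monotoneOn : MonotoneOn g (Set.Ioc 0 (1 / 2)) := by
  rintro x ⟨hx, -⟩ y ⟨-, hy⟩ hxy
  have hy₀ : 0 < y := hx.trans_le hxy
  have hlog : 1 - x / y ≤ log y - log x := by
    have h := log_le_sub_one_of_pos (div_pos hx hy₀)
    rw [log_div hx.ne' hy₀.ne'] at h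
    linarith
  have hquot : 2 * (y - x) ≤ 1 - x / y := by
    rw [one_sub_div hy₀.ne', le_div_iff₀ hy₀]
    nlinarith
  have hbase : log y - log x ≤ (log y - log x) / log 2 :=
    le_div_self (by linarith) (log_pos one_lt_two) (by linarith [log_two_lt_d9])
  simp only [g, logb]
  linarith [sub_div (log y) (log x) (log 2)]

theorem mul_g_nonpos_of_le_half {x : ℝ} (hx₀ : 0 ≤ x) (hx : x ≤ 1 / 2) : x * g x ≤ 0 := by
  rcases hx₀.eq_or_lt with rfl | hx₀
  · simp
  refine mul_nonpos_of_nonneg_of_nonpos hx₀.le ?_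
  rw [← g_half]
  exact g_monotoneOn ⟨hx₀, hx⟩ ⟨by norm_num, le_rfl⟩ hx

theorem mul_g_add_mul_g_one_sub_nonpos {p : ℝ} (hp₀ : 0 ≤ p) (hp₁ : p ≤ 1) :
    p * g p + (1 - p) * g (1 - p) ≤ 0 := by
  have hlog2 : 0 < log 2 := log_pos one_lt_two
  have h : p * g p + (1 - p) * g (1 - p) = (4 * log 2 * p * (1 - p) - binEntropy p) / log 2 := by
    rw [g, g, logb, logb, binEntropy, log_inv, log_inv]
    field_simp
    ring
  rw [h]
  exact div_nonpos_of_nonpos_of_nonneg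
    (sub_nonpos.2 (four_mul_log_two_mul_le_binEntropy hp₀ hp₁)) hlog2.le

theorem sum_mul_g_le_of_sum_le_half {ι : Type*} (s : Finset ι) {a : ι → ℝ}
    (ha : ∀ i ∈ s, 0 ≤ a i) (hs : ∑ i ∈ s, a i ≤ 1 / 2) :
    ∑ i ∈ s, a i * g (a i) ≤ (∑ i ∈ s, a i) * g (∑ i ∈ s, a i) := by
  rw [sum_mul]
  refine sum_le_sum fun i hi => ?_
  rcases (ha i hi).eq_or_lt with hai | hai
  · simp [← hai]
  have hle : a i ≤ ∑ i ∈ s, a i := single_le_sum ha hi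
  exact mul_le_mul_of_nonneg_left
    (g_monotoneOn ⟨hai, hle.trans hs⟩ ⟨hai.trans_le hle, hs⟩ hle) hai.le

end ProbVector

theorem prob_vector_sum_g_nonpos_general
    (m : ℕ) (a : Fin m → ℝ)
    (ha : ∀ i, 0 ≤ a i) (hsum : ∑ i, a i = 1) :
    ∑ i, a i * (2 - 2 * a i + Real.logb 2 (a i)) ≤ 0 := by
  change ∑ i, a i * ProbVector.g (a i) ≤ 0
  by_cases hsmall : ∀ i, a i ≤ 1 / 2
  · exact sum_nonpos fun i _ => ProbVector.mul_g_nonpos_of_le_half (ha i) (hsmall i)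
  push Not at hsmall
  obtain ⟨j, hj⟩ := hsmall
  have hrest : ∑ i ∈ univ.erase j, a i = 1 - a j := by
    rw [← hsum, ← add_sum_erase _ _ (mem_univ j)]
    ring
  have hrest_nonneg : 0 ≤ 1 - a j := hrest ▸ sum_nonneg fun i _ => ha i
  have hothers := ProbVector.sum_mul_g_le_of_sum_le_half (univ.erase j) (fun i _ => ha i)
    (by linarith)
  rw [hrest] at hothers
  have hpair := ProbVector.mul_g_add_mul_g_one_sub_nonpos (ha j) (by linarith)
  rw [← add_sum_erase _ _ (mem_univ j)]
  linarith

theorem prob_vector_sum_g_nonpos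
    (m : ℕ) (hm : 3 ≤ m) (a : Fin m → ℝ)
    (ha : ∀ i, 0 ≤ a i) (hsum : ∑ i, a i = 1) :
    ∑ i, a i * (2 - 2 * a i + Real.logb 2 (a i)) ≤ 0 :=
  prob_vector_sum_g_nonpos_general m a ha hsum
end

section
/- Let m ≥ 3 and let a_1,…,a_m ≥ 0 with Σ_{i=1}^m a_i = 1. Then 2(m−1)(1 − Σ_{i=1}^m a_i²) ≥ (Σ_{i=1}^m a_i log₂ a_i)², with the convention a log₂ a = 0 when a = 0. -/
lemma poly_ineq (x : ℝ) (h0 : 0 ≤ x) (h1 : x ≤ 1) :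
    45*x^2*(1-x) ≤ 0.4804*(1+x+x^2)*(9-7*x^3) := by
  nlinarith [sq_nonneg (x - 0.7), sq_nonneg x, sq_nonneg (x*(x-0.7)), sq_nonneg (x^2*(x-0.7)), mul_nonneg h0 (sub_nonneg.2 h1), sq_nonneg (x-1), sq_nonneg (x^2-x)]

lemma neg_log_le (s : ℝ) (h0 : 0 < s) (h1 : s ≤ 1) :
    -(2*s*Real.log s) ≤ 1 - s^2 := by
  rcases eq_or_lt_of_le h1 with rfl | h1
  · simp
  · have hx : 0 < -Real.log s := by
      have := Real.log_neg h0 h1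
      linarith
    have hs := Real.self_lt_sinh_iff.mpr hx
    rw [Real.sinh_eq] at hs
    rw [Real.exp_neg, neg_neg, Real.exp_log h0] at hs
    have : -Real.log s < (s⁻¹ - s)/2 := hs
    have h2 : -(2*s*Real.log s) < s * (s⁻¹ - s) := by
      have := mul_lt_mul_of_pos_left this h0
      calc -(2*s*Real.log s) = 2 * (s * -Real.log s) := by ring
        _ < 2 * (s * ((s⁻¹ - s)/2)) := by nlinarith
        _ = s * (s⁻¹ - s) := by ring
    have : s * (s⁻¹ - s) = 1 - s^2 := by field_simp
    linarith [h2.le, this.le, this.ge]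

lemma pointwise_ent (a : ℝ) (h0 : 0 ≤ a) (h1 : a ≤ 1) :
    (a * Real.log a)^2 ≤ (Real.log 2)^2 * (2*a*(1-a)) * ((2*a+9*(1-a))/10) := by
  rcases h0.eq_or_lt with rfl | h0pos
  · simp
  · set s := a ^ ((6:ℝ)⁻¹) with hs
    have hs0 : 0 < s := Real.rpow_pos_of_pos h0pos _
    have hs1 : s ≤ 1 := Real.rpow_le_one h0 h1 (by norm_num)
    have hsa : s^(6:ℕ) = a := by
      rw [hs, ← Real.rpow_natCast (a ^ ((6:ℝ)⁻¹)) 6, ← Real.rpow_mul h0]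
      norm_num
    have hlog : Real.log a = 6 * Real.log s := by
      rw [← hsa, Real.log_pow]; ring
    have k1 : -(2*s*Real.log s) ≤ 1 - s^2 := neg_log_le s hs0 hs1
    have hls : Real.log s ≤ 0 := Real.log_nonpos hs0.le hs1
    have hnn : 0 ≤ -(2*s*Real.log s) := by nlinarith
    have k1' : (2*s*Real.log s)^2 ≤ (1-s^2)^2 := by
      nlinarith [mul_self_le_mul_self hnn k1]
    have hx1 : s^2 ≤ 1 := by nlinarith
    have p := poly_ineq (s^2) (sq_nonneg s) hx1
    have hlt : (0.4804:ℝ) ≤ (Real.log 2)^2 := by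
      have h := Real.log_two_gt_d9
      nlinarith [h]
    have hfac : (0:ℝ) ≤ (s^2)^3 * (1 - s^2) := by
      apply mul_nonneg (by positivity); linarith
    have p2 := mul_le_mul_of_nonneg_right p hfac
    have p3 : 45*s^10*(1-s^2)^2 ≤ 0.4804 * (s^6*(1-s^6)*(9-7*s^6)) := by
      linarith [p2]
    have hs6 : s^6 ≤ 1 := by
      calc s^6 = (s^2)^3 := by ring
        _ ≤ 1 := by nlinarith
    have h6nn : (0:ℝ) ≤ s^6*(1-s^6)*(9-7*s^6) := by
      apply mul_nonneg (mul_nonneg (by positivity) (by linarith)); linarith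
    have hmul := mul_le_mul_of_nonneg_right hlt h6nn
    have p4 : 9*s^10*(1-s^2)^2 ≤ (Real.log 2)^2 * (s^6*(1-s^6)*(9-7*s^6))/5 := by
      linarith [p3, hmul]
    have e1 : (a*Real.log a)^2 = 9*s^10*(2*s*Real.log s)^2 := by
      rw [hlog, ← hsa]; ring
    have e2 : 9*s^10*(2*s*Real.log s)^2 ≤ 9*s^10*(1-s^2)^2 := by
      have h9 : (0:ℝ) ≤ 9*s^10 := by positivity
      exact mul_le_mul_of_nonneg_left k1' h9
    have e3 : (Real.log 2)^2 * (2*a*(1-a)) * ((2*a+9*(1-a))/10)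
        = (Real.log 2)^2 * (s^6*(1-s^6)*(9-7*s^6))/5 := by
      rw [← hsa]; ring
    rw [e1, e3]
    linarith

open Finset

theorem prob_vector_entropy_sq_le
    (m : ℕ) (hm : 3 ≤ m) (a : Fin m → ℝ)
    (ha : ∀ i, 0 ≤ a i) (hsum : ∑ i, a i = 1) :
    2 * ((m : ℝ) - 1) * (1 - ∑ i, (a i) ^ 2) ≥
      (∑ i, a i * Real.logb 2 (a i)) ^ 2 := by
  have ha1 : ∀ i, a i ≤ 1 := by
    intro i
    have h := Finset.single_le_sum (f := a) (fun j _ => ha j) (Finset.mem_univ i)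
    rw [hsum] at h; exact h
  have hQle : ∑ i, (a i)^2 ≤ 1 := by
    calc ∑ i, (a i)^2 ≤ ∑ i, a i :=
          Finset.sum_le_sum (fun i _ => by nlinarith [ha i, ha1 i])
      _ = 1 := hsum
  set G : Fin m → ℝ := fun i => Real.sqrt (2*a i*(1-a i)) with hG
  set K : Fin m → ℝ := fun i => Real.sqrt ((2*a i+9*(1-a i))/10) with hK
  have hGnn : ∀ i, (0:ℝ) ≤ 2*a i*(1-a i) := fun i => by nlinarith [ha i, ha1 i]
  have hKnn : ∀ i, (0:ℝ) ≤ (2*a i+9*(1-a i))/10 := fun i => by nlinarith [ha i, ha1 i]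
  have hlog2 : (0:ℝ) ≤ Real.log 2 := Real.log_nonneg one_le_two
  have hFi : ∀ i, -(a i * Real.log (a i)) ≤ Real.log 2 * (G i * K i) := by
    intro i
    have h2 := pointwise_ent (a i) (ha i) (ha1 i)
    have h3 : -(a i * Real.log (a i)) ≤ Real.sqrt ((a i * Real.log (a i))^2) := by
      rw [Real.sqrt_sq_eq_abs]; exact neg_le_abs _
    have h4 := Real.sqrt_le_sqrt h2
    have h5 : Real.sqrt ((Real.log 2)^2 * (2*a i*(1-a i)) * ((2*a i+9*(1-a i))/10))
        = Real.log 2 * (G i * K i) := by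
      rw [Real.sqrt_mul (mul_nonneg (sq_nonneg _) (hGnn i)), Real.sqrt_mul (sq_nonneg _),
        Real.sqrt_sq hlog2, hG, hK]
      ring
    calc -(a i * Real.log (a i)) ≤ _ := h3
      _ ≤ _ := h4
      _ = _ := h5
  have hsumF : ∑ i, -(a i * Real.log (a i)) ≤ Real.log 2 * ∑ i, G i * K i := by
    calc ∑ i, -(a i * Real.log (a i)) ≤ ∑ i, Real.log 2 * (G i * K i) :=
          Finset.sum_le_sum (fun i _ => hFi i)
      _ = Real.log 2 * ∑ i, G i * K i := by rw [Finset.mul_sum]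
  have hCS := Finset.sum_mul_sq_le_sq_mul_sq Finset.univ G K
  have hG2 : ∑ i, G i ^ 2 = 2 - 2*∑ i, (a i)^2 := by
    have : ∀ i ∈ Finset.univ, G i ^ 2 = 2 * a i - 2 * (a i)^2 := by
      intro i _
      rw [hG]; dsimp only
      rw [Real.sq_sqrt (hGnn i)]; ring
    rw [Finset.sum_congr rfl this, Finset.sum_sub_distrib, ← Finset.mul_sum,
      ← Finset.mul_sum, hsum]
    ring
  have hK2 : ∑ i, K i ^ 2 = (9*(m:ℝ) - 7)/10 := by
    have h1 : ∀ i ∈ Finset.univ, K i ^ 2 = 9/10 - (7/10) * a i := by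
      intro i _
      rw [hK]; dsimp only
      rw [Real.sq_sqrt (hKnn i)]; ring
    rw [Finset.sum_congr rfl h1, Finset.sum_sub_distrib, ← Finset.mul_sum, hsum,
      Finset.sum_const, Finset.card_univ, Fintype.card_fin]
    push_cast; ring
  have hGKnn : (0:ℝ) ≤ ∑ i, G i * K i :=
    Finset.sum_nonneg (fun i _ => mul_nonneg (Real.sqrt_nonneg _) (Real.sqrt_nonneg _))
  have hNnn : (0:ℝ) ≤ ∑ i, -(a i * Real.log (a i)) :=
    Finset.sum_nonneg (fun i _ => by
      have := Real.log_nonpos (ha i) (ha1 i)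
      nlinarith [ha i])
  set T := ∑ i, a i * Real.log (a i) with hT
  have hTneg : ∑ i, -(a i * Real.log (a i)) = -T := by
    rw [hT, ← Finset.sum_neg_distrib]
  rw [hTneg] at hsumF hNnn
  have hsq : T^2 ≤ (Real.log 2)^2 * ((∑ i, G i * K i)^2) := by
    have h1 : (-T)^2 ≤ (Real.log 2 * ∑ i, G i * K i)^2 := by
      apply pow_le_pow_left₀ hNnn hsumF
    calc T^2 = (-T)^2 := by ring
      _ ≤ _ := h1
      _ = (Real.log 2)^2 * ((∑ i, G i * K i)^2) := by ring
  have hm3 : (3:ℝ) ≤ (m:ℝ) := by exact_mod_cast hm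
  set Q := ∑ i, (a i)^2 with hQ
  have hbound : T^2 ≤ (Real.log 2)^2 * (2*((m:ℝ)-1)*(1-Q)) := by
    have h2 : (∑ i, G i * K i)^2 ≤ (2 - 2*Q) * ((9*(m:ℝ)-7)/10) := by
      rw [← hG2, ← hK2]; exact hCS
    have h3 : (2 - 2*Q) * ((9*(m:ℝ)-7)/10) ≤ 2*((m:ℝ)-1)*(1-Q) := by
      nlinarith [hQle, hm3]
    have h4 : (0:ℝ) ≤ (Real.log 2)^2 := sq_nonneg _
    nlinarith [hsq, mul_le_mul_of_nonneg_left (h2.trans h3) h4]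
  have hlogb : ∑ i, a i * Real.logb 2 (a i) = T / Real.log 2 := by
    rw [hT, Finset.sum_div]
    exact Finset.sum_congr rfl (fun i _ => by rw [Real.logb]; ring)
  rw [ge_iff_le, hlogb, div_pow]
  rw [div_le_iff₀ (by positivity : (0:ℝ) < (Real.log 2)^2)]
  nlinarith [hbound]
end

section
/- (Theorem 1, upper bound.) The multi-class Bayes error rate satisfies ε^m ≤ 2 Σ_{1≤i<j≤m} δ^m_ij. -/
open MeasureTheory Finset

/-- The mixture density `f⁽ᵐ⁾(x) = ∑ₖ pₖ fₖ(x)`. -/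
noncomputable def mixture {m d : ℕ} (p : Fin m → ℝ) (f : Fin m → (Fin d → ℝ) → ℝ)
    (x : Fin d → ℝ) : ℝ :=
  ∑ k, p k * f k x

/-- The multi-class Bayes error rate `ε^m = 1 - ∫ max_k pₖ fₖ(x) dx`. -/
noncomputable def bayesError {m d : ℕ} (p : Fin m → ℝ) (f : Fin m → (Fin d → ℝ) → ℝ) : ℝ :=
  1 - ∫ x : Fin d → ℝ, ⨆ k, p k * f k x

/-- `δ^m_ij = ∫ pᵢ pⱼ fᵢ(x) fⱼ(x) / f⁽ᵐ⁾(x) dx` (integrand `0` where the denominator is `0`). -/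
noncomputable def deltaGHP {m d : ℕ} (p : Fin m → ℝ) (f : Fin m → (Fin d → ℝ) → ℝ)
    (i j : Fin m) : ℝ :=
  ∫ x : Fin d → ℝ, p i * p j * f i x * f j x / mixture p f x

/-- `δ_ij = ∫ pᵢ pⱼ fᵢ(x) fⱼ(x) / (pᵢ fᵢ(x) + pⱼ fⱼ(x)) dx`
(integrand `0` where the denominator is `0`). -/
noncomputable def deltaPW {m d : ℕ} (p : Fin m → ℝ) (f : Fin m → (Fin d → ℝ) → ℝ)
    (i j : Fin m) : ℝ :=
  ∫ x : Fin d → ℝ, p i * p j * f i x * f j x / (p i * f i x + p j * f j x)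


private lemma sq_sum_identity {m : ℕ} (b : Fin m → ℝ) :
    (∑ k, b k) ^ 2 = ∑ k, b k ^ 2 + 2 * ∑ i, ∑ j, (if i < j then b i * b j else 0) := by
  have h1 : (∑ k, b k) ^ 2 = ∑ i, ∑ j, b i * b j := by
    rw [sq, Finset.sum_mul_sum]
  have h2 : ∀ i j : Fin m, b i * b j =
      (if i = j then b i * b j else 0) + (if i < j then b i * b j else 0) +
        (if j < i then b i * b j else 0) := by
    intro i j
    rcases lt_trichotomy i j with h | h | h
    · simp [h, h.ne, lt_asymm h]
    · subst h; simp [lt_irrefl]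
    · simp [h, h.ne', lt_asymm h]
  calc (∑ k, b k) ^ 2 = ∑ i, ∑ j, b i * b j := h1
    _ = ∑ i, ∑ j, ((if i = j then b i * b j else 0) + (if i < j then b i * b j else 0) +
          (if j < i then b i * b j else 0)) :=
        Finset.sum_congr rfl fun i _ => Finset.sum_congr rfl fun j _ => h2 i j
    _ = (∑ i, ∑ j, if i = j then b i * b j else 0) + (∑ i, ∑ j, if i < j then b i * b j else 0)
          + (∑ i : Fin m, ∑ j : Fin m, if j < i then b i * b j else 0) := by
        simp [Finset.sum_add_distrib]
    _ = ∑ k, b k ^ 2 + 2 * ∑ i, ∑ j, (if i < j then b i * b j else 0) := by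
        have hd : (∑ i : Fin m, ∑ j : Fin m, if i = j then b i * b j else 0) = ∑ k, b k ^ 2 := by
          simp [Finset.sum_ite_eq, sq]
        have hsym : (∑ i : Fin m, ∑ j : Fin m, if j < i then b i * b j else 0) =
            ∑ i, ∑ j, if i < j then b i * b j else 0 := by
          rw [Finset.sum_comm]
          exact Finset.sum_congr rfl fun i _ => Finset.sum_congr rfl fun j _ => by
            split_ifs <;> ring
        rw [hd, hsym]; ring

private lemma pointwise_key {m : ℕ} [Nonempty (Fin m)] (b : Fin m → ℝ) (hb : ∀ k, 0 ≤ b k) :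
    (∑ k, b k) - (⨆ k, b k) ≤ 2 * ∑ i, ∑ j, (if i < j then b i * b j / ∑ k, b k else 0) := by
  have hsnn : 0 ≤ ∑ k, b k := Finset.sum_nonneg fun k _ => hb k
  have hbdd : BddAbove (Set.range b) := (Set.finite_range b).bddAbove
  have hble : ∀ k, b k ≤ ⨆ k, b k := fun k => le_ciSup hbdd k
  rcases eq_or_lt_of_le hsnn with h0 | hpos
  · have hb0 : ∀ k, b k = 0 := fun k =>
      (Finset.sum_eq_zero_iff_of_nonneg fun k _ => hb k).mp h0.symm k (mem_univ k)
    simp [hb0, ciSup_const]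
  · have hsum_sq : ∑ k, b k ^ 2 ≤ (∑ k, b k) * ⨆ k, b k := by
      calc ∑ k, b k ^ 2 ≤ ∑ k, b k * ⨆ k, b k :=
          Finset.sum_le_sum fun k _ => by
            rw [sq]; exact mul_le_mul_of_nonneg_left (hble k) (hb k)
        _ = (∑ k, b k) * ⨆ k, b k := (Finset.sum_mul ..).symm
    have hdiv : (∑ i, ∑ j, (if i < j then b i * b j / ∑ k, b k else 0)) =
        (∑ i, ∑ j, (if i < j then b i * b j else 0)) / ∑ k, b k := by
      rw [Finset.sum_div]
      refine Finset.sum_congr rfl fun i _ => ?_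
      rw [Finset.sum_div]
      exact Finset.sum_congr rfl fun j _ => by split_ifs <;> simp
    rw [hdiv, ← mul_div_assoc, le_div_iff₀ hpos]
    have hident := sq_sum_identity b
    nlinarith [hident, hsum_sq]
theorem bayesError_le_two_sum_deltaGHP
    (m d : ℕ) (hm : 2 ≤ m) (hd : 1 ≤ d)
    (p : Fin m → ℝ) (hp : ∀ k, 0 < p k) (hp1 : ∑ k, p k = 1)
    (f : Fin m → (Fin d → ℝ) → ℝ)
    (hfmeas : ∀ k, Measurable (f k))
    (hfnn : ∀ k x, 0 ≤ f k x)
    (hfint : ∀ k, ∫ x : Fin d → ℝ, f k x = 1) :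
    bayesError p f ≤
      2 * ∑ i : Fin m, ∑ j : Fin m, (if i < j then deltaGHP p f i j else 0) := by
  haveI : Nonempty (Fin m) := ⟨⟨0, by omega⟩⟩
  have hInt_f : ∀ k, Integrable (f k) := by
    intro k
    by_contra h
    have h1 := hfint k
    rw [integral_undef h] at h1
    norm_num at h1
  have ha_nn : ∀ k x, (0:ℝ) ≤ p k * f k x := fun k x => mul_nonneg (hp k).le (hfnn k x)
  have hInt_a : ∀ k, Integrable (fun x => p k * f k x) := fun k => (hInt_f k).const_mul _
  have hS_meas : Measurable (mixture p f) := by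
    unfold mixture
    exact Finset.measurable_sum _ fun k _ => (hfmeas k).const_mul _
  have hS_int : Integrable (mixture p f) := by
    unfold mixture
    exact integrable_finset_sum _ fun k _ => hInt_a k
  have hSnn : ∀ x, 0 ≤ mixture p f x := fun x => Finset.sum_nonneg fun k _ => ha_nn k x
  have ha_le : ∀ k x, p k * f k x ≤ mixture p f x := fun k x =>
    Finset.single_le_sum (fun i _ => ha_nn i x) (mem_univ k)
  have hg_le : ∀ x, (⨆ k, p k * f k x) ≤ mixture p f x := fun x => ciSup_le fun k => ha_le k x
  have hg_nn : ∀ x, 0 ≤ ⨆ k, p k * f k x := fun x =>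
    le_trans (ha_nn (Classical.arbitrary _) x)
      (le_ciSup (f := fun k => p k * f k x) ((Set.finite_range _).bddAbove) _)
  have hg_meas : Measurable (fun x => ⨆ k, p k * f k x) := by
    have h1 : Measurable (univ.sup' univ_nonempty (fun k (x : Fin d → ℝ) => p k * f k x)) :=
      Finset.measurable_sup' univ_nonempty (fun k _ => (hfmeas k).const_mul _)
    have h2 : (fun x => ⨆ k, p k * f k x)
        = univ.sup' univ_nonempty (fun k (x : Fin d → ℝ) => p k * f k x) := by
      funext x
      rw [Finset.sup'_apply, Finset.sup'_univ_eq_ciSup]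
    rw [h2]; exact h1
  have hg_int : Integrable (fun x => ⨆ k, p k * f k x) :=
    hS_int.mono hg_meas.aestronglyMeasurable (ae_of_all _ fun x => by
      rw [Real.norm_eq_abs, Real.norm_eq_abs, abs_of_nonneg (hg_nn x), abs_of_nonneg (hSnn x)]
      exact hg_le x)
  have hq_nn : ∀ i j x, (0:ℝ) ≤ p i * p j * f i x * f j x / mixture p f x := fun i j x =>
    div_nonneg (mul_nonneg (mul_nonneg (mul_nonneg (hp i).le (hp j).le) (hfnn i x)) (hfnn j x))
      (hSnn x)
  have hq_le : ∀ i j x, p i * p j * f i x * f j x / mixture p f x ≤ mixture p f x := by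
    intro i j x
    rcases eq_or_lt_of_le (hSnn x) with h0 | hpos
    · rw [← h0, div_zero]
    · rw [div_le_iff₀ hpos]
      calc p i * p j * f i x * f j x = (p i * f i x) * (p j * f j x) := by ring
        _ ≤ mixture p f x * mixture p f x :=
          mul_le_mul (ha_le i x) (ha_le j x) (ha_nn j x) (hSnn x)
  have hq_meas : ∀ i j, Measurable (fun x => p i * p j * f i x * f j x / mixture p f x) :=
    fun i j => (((measurable_const.mul (hfmeas i)).mul (hfmeas j)).div hS_meas)
  have hq_int : ∀ i j, Integrable (fun x => p i * p j * f i x * f j x / mixture p f x) :=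
    fun i j => hS_int.mono (hq_meas i j).aestronglyMeasurable (ae_of_all _ fun x => by
      rw [Real.norm_eq_abs, Real.norm_eq_abs, abs_of_nonneg (hq_nn i j x), abs_of_nonneg (hSnn x)]
      exact hq_le i j x)
  have hite_int : ∀ i j : Fin m,
      Integrable (fun x => if i < j then p i * p j * f i x * f j x / mixture p f x else 0) := by
    intro i j
    by_cases hc : i < j
    · simpa [hc] using hq_int i j
    · simp only [if_neg hc]
      exact integrable_zero _ _ _
  have hS_integral : ∫ x, mixture p f x = 1 := by
    unfold mixture
    rw [integral_finset_sum _ fun k _ => hInt_a k]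
    simp_rw [integral_const_mul]
    simp [hfint, hp1]
  have key : ∀ x, mixture p f x - (⨆ k, p k * f k x) ≤
      2 * ∑ i, ∑ j, (if i < j then p i * p j * f i x * f j x / mixture p f x else 0) := by
    intro x
    have h := pointwise_key (fun k => p k * f k x) (fun k => ha_nn k x)
    have hrw : ∀ i j : Fin m, p i * p j * f i x * f j x = (p i * f i x) * (p j * f j x) :=
      fun i j => by ring
    show mixture p f x - (⨆ k, p k * f k x) ≤ _
    unfold mixture
    simp only [hrw]
    exact h
  have hRHS_int : Integrable (fun x =>
      2 * ∑ i, ∑ j, (if i < j then p i * p j * f i x * f j x / mixture p f x else 0)) :=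
    (integrable_finset_sum _ fun i _ => integrable_finset_sum _ fun j _ => hite_int i j).const_mul 2
  unfold bayesError
  rw [← hS_integral, ← integral_sub hS_int hg_int]
  calc ∫ x, (mixture p f x - ⨆ k, p k * f k x)
      ≤ ∫ x, 2 * ∑ i, ∑ j, (if i < j then p i * p j * f i x * f j x / mixture p f x else 0) :=
        integral_mono (hS_int.sub hg_int) hRHS_int key
    _ = 2 * ∑ i : Fin m, ∑ j : Fin m, (if i < j then deltaGHP p f i j else 0) := by
        rw [integral_const_mul,
          integral_finset_sum _ fun i _ => integrable_finset_sum _ fun j _ => hite_int i j]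
        congr 1
        refine Finset.sum_congr rfl fun i _ => ?_
        rw [integral_finset_sum _ fun j _ => hite_int i j]
        refine Finset.sum_congr rfl fun j _ => ?_
        by_cases hc : i < j
        · simp only [if_pos hc]; rfl
        · simp only [if_neg hc]
          exact integral_zero _ _
end

section
/- (Theorem 1, lower bound.) The multi-class Bayes error rate satisfies ε^m ≥ ((m−1)/m)·[1 − (1 − (2m/(m−1)) Σ_{1≤i<j≤m} δ^m_ij)^{1/2}]. (The quantity under the square root is nonnegative.) -/
open MeasureTheory Finset

-- pairs identity
lemma GHP_pairs_identity {m : ℕ} (a : Fin m → ℝ) :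
    2 * (∑ i : Fin m, ∑ j : Fin m, if i < j then a i * a j else 0) + ∑ k, (a k)^2
      = (∑ k, a k)^2 := by
  have hsplit : ∀ i j : Fin m, a i * a j =
      (if i < j then a i * a j else 0) + (if j < i then a i * a j else 0)
        + (if i = j then a i * a j else 0) := by
    intro i j
    rcases lt_trichotomy i j with h | h | h
    · simp [h, h.ne, not_lt_of_gt h]
    · simp [h]
    · simp [h, h.ne', not_lt_of_gt h]
  have hsq : (∑ k, a k)^2 = ∑ i : Fin m, ∑ j : Fin m, a i * a j := by
    rw [sq, Finset.sum_mul_sum]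
  have h1 : ∑ i : Fin m, ∑ j : Fin m, (if j < i then a i * a j else 0)
      = ∑ i : Fin m, ∑ j : Fin m, (if i < j then a i * a j else 0) := by
    rw [Finset.sum_comm]
    exact Finset.sum_congr rfl fun i _ => Finset.sum_congr rfl fun j _ => by
      rw [mul_comm]
  have h2 : ∑ i : Fin m, ∑ j : Fin m, (if i = j then a i * a j else 0)
      = ∑ k, (a k)^2 := by
    refine Finset.sum_congr rfl fun i _ => ?_
    rw [Finset.sum_ite_eq (Finset.univ) i (fun j => a i * a j)]
    simp [sq]
  rw [hsq]
  symm
  calc ∑ i : Fin m, ∑ j : Fin m, a i * a j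
      = ∑ i : Fin m, ∑ j : Fin m, ((if i < j then a i * a j else 0)
          + (if j < i then a i * a j else 0) + (if i = j then a i * a j else 0)) := by
        exact Finset.sum_congr rfl fun i _ => Finset.sum_congr rfl fun j _ => hsplit i j
    _ = 2 * (∑ i : Fin m, ∑ j : Fin m, if i < j then a i * a j else 0) + ∑ k, (a k)^2 := by
        simp only [Finset.sum_add_distrib, h1, h2]; ring

-- key pointwise inequality
lemma GHP_key_pointwise {m : ℕ} (hm : 2 ≤ m) (a : Fin m → ℝ) (ha : ∀ k, 0 ≤ a k) :
    (∑ i : Fin m, ∑ j : Fin m, if i < j then a i * a j / (∑ k, a k) else 0)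
      ≤ ((∑ k, a k) - (⨆ k, a k))
        - ((m : ℝ) / ((m : ℝ) - 1) / 2) * (((∑ k, a k) - (⨆ k, a k))^2 / (∑ k, a k)) := by
  have hne : Nonempty (Fin m) := ⟨⟨0, by omega⟩⟩
  set F := ∑ k, a k with hF
  set M := ⨆ k, a k with hMdef
  obtain ⟨i0, hi0⟩ : ∃ i, a i = ⨆ k, a k := exists_eq_ciSup_of_finite
  have hi0' : a i0 = M := hi0
  have hbdd : BddAbove (Set.range a) := Set.Finite.bddAbove (Set.finite_range a)
  have hleM : ∀ k, a k ≤ M := fun k => le_ciSup hbdd k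
  have hM0 : 0 ≤ M := (ha i0).trans (hi0'.le)
  have hMF : M ≤ F := by
    rw [← hi0']
    exact Finset.single_le_sum (fun k _ => ha k) (Finset.mem_univ i0)
  have hF0 : 0 ≤ F := Finset.sum_nonneg fun k _ => ha k
  rcases eq_or_lt_of_le hF0 with hF00 | hFpos
  · -- F = 0 : everything is zero
    have hall : ∀ k, a k = 0 := by
      intro k
      have := Finset.sum_eq_zero_iff_of_nonneg (fun k _ => ha k) |>.mp hF00.symm
      exact this k (Finset.mem_univ k)
    have hM00 : M = 0 := le_antisymm (hF00 ▸ hMF) hM0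
    have hL : (∑ i : Fin m, ∑ j : Fin m, if i < j then a i * a j / F else 0) = 0 := by
      refine Finset.sum_eq_zero fun i _ => Finset.sum_eq_zero fun j _ => ?_
      split <;> simp [hall]
    rw [hL, hM00, ← hF00]
    simp
  · -- F > 0
    set D : ℝ := (m : ℝ) - 1 with hD
    have hm1 : (1 : ℝ) ≤ (m : ℝ) - 1 := by
      have : (2 : ℝ) ≤ (m : ℝ) := by exact_mod_cast hm
      linarith
    have hDpos : 0 < D := by rw [hD]; linarith
    set P := ∑ i : Fin m, ∑ j : Fin m, if i < j then a i * a j else 0 with hP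
    set Q := ∑ k, (a k)^2 with hQ
    have hid : 2 * P + Q = F^2 := GHP_pairs_identity a
    set s : Finset (Fin m) := Finset.univ.erase i0 with hs
    have hcard : (s.card : ℝ) = D := by
      rw [hs, Finset.card_erase_of_mem (Finset.mem_univ i0)]
      simp only [Finset.card_univ, Fintype.card_fin, hD]
      rw [Nat.cast_sub (by omega)]
      simp
    have hsum_s : ∑ k ∈ s, a k = F - M := by
      have h : a i0 + ∑ x ∈ Finset.univ.erase i0, a x = ∑ x, a x :=
        Finset.add_sum_erase Finset.univ a (Finset.mem_univ i0)
      rw [hi0'] at h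
      rw [hs]
      linarith [h]
    have hQs : ∑ k ∈ s, (a k)^2 = Q - M^2 := by
      have h : a i0 ^ 2 + ∑ x ∈ Finset.univ.erase i0, (a x)^2 = ∑ x, (a x)^2 :=
        Finset.add_sum_erase Finset.univ (fun k => (a k)^2) (Finset.mem_univ i0)
      rw [hi0'] at h
      rw [hs]
      linarith [h]
    have hcs : (∑ k ∈ s, a k)^2 ≤ (s.card : ℝ) * ∑ k ∈ s, (a k)^2 := by
      exact sq_sum_le_card_mul_sum_sq
    have hQkey : (F - M)^2 ≤ D * (Q - M^2) := by
      calc (F - M)^2 = (∑ k ∈ s, a k)^2 := by rw [hsum_s]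
        _ ≤ (s.card : ℝ) * ∑ k ∈ s, (a k)^2 := hcs
        _ = D * (Q - M^2) := by rw [hcard, hQs]
    have hLHS : (∑ i : Fin m, ∑ j : Fin m, if i < j then a i * a j / F else 0) = P / F := by
      rw [hP, Finset.sum_div]
      refine Finset.sum_congr rfl fun i _ => ?_
      rw [Finset.sum_div]
      refine Finset.sum_congr rfl fun j _ => ?_
      split <;> simp
    rw [hLHS]
    have hm' : (m : ℝ) = D + 1 := by rw [hD]; ring
    rw [div_le_iff₀ hFpos]
    have hexp : ((F - M) - (m : ℝ) / D / 2 * ((F - M)^2 / F)) * F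
        = (F - M) * F - (m : ℝ) / D / 2 * (F - M) ^ 2 := by
      rw [sub_mul, mul_assoc, div_mul_cancel₀ _ (ne_of_gt hFpos)]
    rw [hexp, hm']
    have hid' : D * (2 * P + Q) = D * F^2 := by rw [hid]
    have hmain : (D + 1) * (F - M)^2 ≤ ((F - M) * F - P) * (2 * D) := by
      nlinarith [hQkey, hid']
    have hdiv : (D + 1) / D / 2 * (F - M)^2 ≤ (F - M) * F - P := by
      rw [div_div, div_mul_eq_mul_div, div_le_iff₀ (by positivity : (0:ℝ) < D * 2)]
      linarith [hmain]
    linarith [hdiv]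
theorem bayesError_ge_GHP_lower_bound
    (m d : ℕ) (hm : 2 ≤ m) (hd : 1 ≤ d)
    (p : Fin m → ℝ) (hp : ∀ k, 0 < p k) (hp1 : ∑ k, p k = 1)
    (f : Fin m → (Fin d → ℝ) → ℝ)
    (hfmeas : ∀ k, Measurable (f k))
    (hfnn : ∀ k x, 0 ≤ f k x)
    (hfint : ∀ k, ∫ x : Fin d → ℝ, f k x = 1) :
    bayesError p f ≥
      ((m : ℝ) - 1) / m *
        (1 - Real.sqrt (1 - (2 * m / ((m : ℝ) - 1)) *
          ∑ i : Fin m, ∑ j : Fin m, (if i < j then deltaGHP p f i j else 0))) := by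
  have hne : Nonempty (Fin m) := ⟨⟨0, by omega⟩⟩
  -- basic casts
  have hm2 : (2 : ℝ) ≤ (m : ℝ) := by exact_mod_cast hm
  set D : ℝ := (m : ℝ) - 1 with hD
  have hDpos : (0 : ℝ) < D := by rw [hD]; linarith
  have hmpos : (0 : ℝ) < (m : ℝ) := by linarith
  set c : ℝ := (m : ℝ) / D with hc
  have hcpos : 0 < c := div_pos hmpos hDpos
  -- the mixture F
  set F : (Fin d → ℝ) → ℝ := mixture p f with hFdef
  have hFmeas : Measurable F := by
    apply Finset.measurable_sum
    exact fun k _ => (hfmeas k).const_mul (p k)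
  have hFnn : ∀ x, 0 ≤ F x := fun x =>
    Finset.sum_nonneg fun k _ => mul_nonneg (hp k).le (hfnn k x)
  have hfk_int : ∀ k, Integrable (f k) := by
    intro k
    by_contra h
    have := integral_undef h
    rw [hfint k] at this
    norm_num at this
  have hFint : Integrable F := by
    apply integrable_finset_sum
    exact fun k _ => ((hfk_int k).const_mul (p k))
  have hFone : ∫ x, F x = 1 := by
    rw [hFdef]
    show (∫ x, ∑ k, p k * f k x) = 1
    rw [integral_finset_sum _ fun k _ => ((hfk_int k).const_mul (p k))]
    simp_rw [integral_const_mul, hfint, mul_one, hp1]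
  -- the max M
  set M : (Fin d → ℝ) → ℝ := fun x => ⨆ k, p k * f k x with hMdef
  have hMmeas : Measurable M :=
    Measurable.iSup fun k => (hfmeas k).const_mul (p k)
  have hterm_le_F : ∀ k x, p k * f k x ≤ F x := fun k x =>
    Finset.single_le_sum (fun j _ => mul_nonneg (hp j).le (hfnn j x)) (Finset.mem_univ k)
  have hMnn : ∀ x, 0 ≤ M x := by
    intro x
    have hb : BddAbove (Set.range fun k => p k * f k x) :=
      Set.Finite.bddAbove (Set.finite_range _)
    exact le_trans (mul_nonneg (hp (Classical.arbitrary _)).le (hfnn _ x))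
      (le_ciSup hb (Classical.arbitrary _))
  have hMF : ∀ x, M x ≤ F x := fun x => ciSup_le fun k => hterm_le_F k x
  have hMint : Integrable M := by
    refine Integrable.mono' hFint hMmeas.aestronglyMeasurable ?_
    filter_upwards with x
    rw [Real.norm_eq_abs, abs_of_nonneg (hMnn x)]
    exact hMF x
  -- epsilon
  set ε : ℝ := bayesError p f with hεdef
  have hε : ε = 1 - ∫ x, M x := rfl
  -- F = 0 → M = 0
  have hF0M : ∀ x, F x = 0 → M x = 0 := fun x h =>
    le_antisymm (h ▸ hMF x) (hMnn x)
  -- integrand of deltaGHP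
  set g : Fin m → Fin m → (Fin d → ℝ) → ℝ :=
    fun i j x => p i * p j * f i x * f j x / mixture p f x with hgdef
  have hgmeas : ∀ i j, Measurable (g i j) := fun i j =>
    ((((measurable_const.mul measurable_const).mul (hfmeas i)).mul (hfmeas j)).div hFmeas)
  have hgnn : ∀ i j x, 0 ≤ g i j x := fun i j x =>
    div_nonneg (mul_nonneg (mul_nonneg (mul_nonneg (hp i).le (hp j).le) (hfnn i x))
      (hfnn j x)) (hFnn x)
  have hgle : ∀ i j x, g i j x ≤ p j * f j x := by
    intro i j x
    rcases eq_or_lt_of_le (hFnn x) with h0 | hpos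
    · show _ / F x ≤ _
      rw [← h0, div_zero]
      exact mul_nonneg (hp j).le (hfnn j x)
    · show _ / F x ≤ _
      rw [div_le_iff₀ hpos]
      calc p i * p j * f i x * f j x = (p i * f i x) * (p j * f j x) := by ring
        _ ≤ F x * (p j * f j x) :=
            mul_le_mul_of_nonneg_right (hterm_le_F i x) (mul_nonneg (hp j).le (hfnn j x))
        _ = p j * f j x * F x := by ring
  have hgint : ∀ i j, Integrable (g i j) := by
    intro i j
    refine Integrable.mono' ((hfk_int j).const_mul (p j)) (hgmeas i j).aestronglyMeasurable ?_
    filter_upwards with x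
    rw [Real.norm_eq_abs, abs_of_nonneg (hgnn i j x)]
    exact hgle i j x
  -- the sum S
  set S : ℝ := ∑ i : Fin m, ∑ j : Fin m, (if i < j then deltaGHP p f i j else 0) with hSdef
  set G : (Fin d → ℝ) → ℝ :=
    fun x => ∑ i : Fin m, ∑ j : Fin m, (if i < j then g i j x else 0) with hGdef
  have hGint : Integrable G := by
    apply integrable_finset_sum
    intro i _
    apply integrable_finset_sum
    intro j _
    by_cases h : i < j
    · simpa [h] using hgint i j
    · simpa [h] using integrable_zero _ _ _
  have hSG : S = ∫ x, G x := by
    rw [hSdef, hGdef]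
    rw [integral_finset_sum _ fun i _ => ?_]
    · refine Finset.sum_congr rfl fun i _ => ?_
      rw [integral_finset_sum _ fun j _ => ?_]
      · refine Finset.sum_congr rfl fun j _ => ?_
        by_cases h : i < j
        · simp only [h, if_true]
          rfl
        · simp only [h, if_false, integral_zero]
      · by_cases h : i < j
        · simpa [h] using hgint i j
        · simpa [h] using integrable_zero _ _ _
    · apply integrable_finset_sum
      intro j _
      by_cases h : i < j
      · simpa [h] using hgint i j
      · simpa [h] using integrable_zero _ _ _
  -- h = (F-M)^2/F
  set hh : (Fin d → ℝ) → ℝ := fun x => (F x - M x)^2 / F x with hhdef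
  have hhmeas : Measurable hh := ((hFmeas.sub hMmeas).pow_const 2).div hFmeas
  have hhnn : ∀ x, 0 ≤ hh x := fun x => div_nonneg (sq_nonneg _) (hFnn x)
  have hhleF : ∀ x, hh x ≤ F x := by
    intro x
    rcases eq_or_lt_of_le (hFnn x) with h0 | hpos
    · show (F x - M x)^2 / F x ≤ F x
      rw [← h0, div_zero]
    · show (F x - M x)^2 / F x ≤ F x
      rw [div_le_iff₀ hpos]
      have h1 : F x - M x ≤ F x := by linarith [hMnn x]
      have h2 : 0 ≤ F x - M x := by linarith [hMF x]
      calc (F x - M x)^2 ≤ (F x)^2 := by nlinarith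
        _ = F x * F x := sq (F x)
  have hhint : Integrable hh := by
    refine Integrable.mono' hFint hhmeas.aestronglyMeasurable ?_
    filter_upwards with x
    rw [Real.norm_eq_abs, abs_of_nonneg (hhnn x)]
    exact hhleF x
  -- pointwise key inequality
  have hkey : ∀ x, G x ≤ (F x - M x) - (c / 2) * hh x := by
    intro x
    have := GHP_key_pointwise hm (fun k => p k * f k x)
      (fun k => mul_nonneg (hp k).le (hfnn k x))
    have hGx : G x = ∑ i : Fin m, ∑ j : Fin m,
        if i < j then (p i * f i x) * (p j * f j x) / (∑ k, p k * f k x) else 0 := by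
      refine Finset.sum_congr rfl fun i _ => Finset.sum_congr rfl fun j _ => ?_
      by_cases h : i < j
      · simp only [h, if_true]
        show p i * p j * f i x * f j x / mixture p f x = _
        rw [mixture]
        ring_nf
      · simp [h]
    rw [hGx]
    exact this
  -- integrate
  have hFMint : Integrable (fun x => F x - M x) := hFint.sub hMint
  have hεFM : ∫ x, (F x - M x) = ε := by
    rw [integral_sub hFint hMint, hFone, hε]
  have hSle : S ≤ ε - (c / 2) * ∫ x, hh x := by
    rw [hSG]
    calc ∫ x, G x ≤ ∫ x, ((F x - M x) - (c / 2) * hh x) := by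
          apply integral_mono hGint (hFMint.sub (hhint.const_mul _))
          exact hkey
      _ = (∫ x, (F x - M x)) - (c/2) * ∫ x, hh x := by
          rw [integral_sub hFMint (hhint.const_mul _), integral_const_mul]
      _ = ε - (c / 2) * ∫ x, hh x := by rw [hεFM]
  -- variance trick: ∫ hh ≥ ε²
  have hvar : ε^2 ≤ ∫ x, hh x := by
    have hNnn : ∀ x, 0 ≤ hh x - 2 * ε * (F x - M x) + ε^2 * F x := by
      intro x
      rcases eq_or_lt_of_le (hFnn x) with h0 | hpos
      · have hM0 : M x = 0 := hF0M x h0.symm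
        show 0 ≤ (F x - M x)^2 / F x - _ + _
        rw [← h0, hM0]
        simp
      · have : hh x - 2 * ε * (F x - M x) + ε^2 * F x
            = ((F x - M x) - ε * F x)^2 / F x := by
          rw [hhdef]
          field_simp
          ring
        rw [this]
        positivity
    have hi1 : Integrable (fun x => 2 * ε * (F x - M x)) := hFMint.const_mul _
    have hi2 : Integrable (fun x => hh x - 2 * ε * (F x - M x)) := hhint.sub hi1
    have hi3 : Integrable (fun x => ε^2 * F x) := hFint.const_mul _
    have h0le : 0 ≤ ∫ x, (hh x - 2 * ε * (F x - M x) + ε^2 * F x) :=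
      integral_nonneg hNnn
    have hcalc : ∫ x, (hh x - 2 * ε * (F x - M x) + ε^2 * F x)
        = (∫ x, hh x) - 2 * ε * ε + ε^2 * 1 := by
      rw [integral_add hi2 hi3, integral_sub hhint hi1, integral_const_mul, integral_const_mul,
        hεFM, hFone]
    rw [hcalc] at h0le
    nlinarith [h0le]
  -- combine: S ≤ ε - (c/2) ε²
  have hScε : S ≤ ε - (c / 2) * ε^2 := by
    have := mul_le_mul_of_nonneg_left hvar (by positivity : (0:ℝ) ≤ c / 2)
    linarith [hSle]
  -- final algebra
  have hX : 1 - (2 * (m:ℝ) / D) * S = 1 - 2 * c * S := by rw [hc]; ring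
  have hsq' : (1 - c * ε)^2 ≤ 1 - 2 * c * S := by
    have h1 : 2 * c * S ≤ 2 * c * (ε - (c/2) * ε^2) :=
      mul_le_mul_of_nonneg_left hScε (by positivity)
    nlinarith [h1]
  have hsqrt : 1 - c * ε ≤ Real.sqrt (1 - 2 * c * S) := by
    calc 1 - c * ε ≤ |1 - c * ε| := le_abs_self _
      _ = Real.sqrt ((1 - c * ε)^2) := (Real.sqrt_sq_eq_abs _).symm
      _ ≤ Real.sqrt (1 - 2 * c * S) := Real.sqrt_le_sqrt hsq'
  rw [ge_iff_le, hX]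
  have hfrac : D / (m:ℝ) * c = 1 := by
    rw [hc]
    field_simp
  calc D / (m:ℝ) * (1 - Real.sqrt (1 - 2 * c * S))
      ≤ D / (m:ℝ) * (c * ε) := by
        apply mul_le_mul_of_nonneg_left _ (by positivity)
        linarith [hsqrt]
    _ = ε := by rw [← mul_assoc, hfrac, one_mul]
end

section
/- (Theorem 3, upper bounds: GHP upper bound is tighter than the pairwise HP upper bound.) The multi-class Bayes error rate satisfies ε^m ≤ 2 Σ_{1≤i<j≤m} δ^m_ij ≤ 2 Σ_{1≤i<j≤m} δ_ij. -/
open MeasureTheory Finset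

lemma sq_sum_eq_pairs {m : ℕ} (a : Fin m → ℝ) :
    (∑ k, a k) ^ 2 = ∑ k, (a k) ^ 2 + 2 * ∑ i, ∑ j, (if i < j then a i * a j else 0) := by
  classical
  rw [sq, Finset.sum_mul_sum]
  have key : ∀ i j : Fin m, a i * a j =
      (if i = j then (a i)^2 else 0) + ((if i < j then a i * a j else 0)
        + (if j < i then a i * a j else 0)) := by
    intro i j
    rcases lt_trichotomy i j with h | h | h
    · simp [h, h.ne, h.asymm, not_lt_of_gt h]
    · simp [h, sq]
    · simp [h, h.ne', h.asymm, not_lt_of_gt h]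
  calc ∑ i, ∑ j, a i * a j
      = ∑ i, ∑ j, ((if i = j then (a i)^2 else 0) + ((if i < j then a i * a j else 0)
        + (if j < i then a i * a j else 0))) := by
        simp only [← key]
    _ = ∑ k, (a k) ^ 2 + (∑ i, ∑ j, (if i < j then a i * a j else 0)
        + ∑ i, ∑ j, (if j < i then a i * a j else 0)) := by
        simp [Finset.sum_add_distrib]
    _ = ∑ k, (a k) ^ 2 + 2 * ∑ i, ∑ j, (if i < j then a i * a j else 0) := by
        rw [Finset.sum_comm (f := fun i j => (if j < i then a i * a j else 0))]
        have : ∀ i j : Fin m, (if i < j then a j * a i else 0)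
            = (if i < j then a i * a j else 0) := by
          intro i j; ring_nf
        simp only [this]
        ring

section Aux

variable {m d : ℕ} {p : Fin m → ℝ} {f : Fin m → (Fin d → ℝ) → ℝ}

lemma term_nonneg (hp : ∀ k, 0 < p k) (hfnn : ∀ k x, 0 ≤ f k x) (k : Fin m) (x : Fin d → ℝ) :
    0 ≤ p k * f k x := mul_nonneg (hp k).le (hfnn k x)

lemma mixture_nonneg (hp : ∀ k, 0 < p k) (hfnn : ∀ k x, 0 ≤ f k x) (x : Fin d → ℝ) :
    0 ≤ mixture p f x :=
  Finset.sum_nonneg fun k _ => term_nonneg hp hfnn k x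

lemma term_le_mixture (hp : ∀ k, 0 < p k) (hfnn : ∀ k x, 0 ≤ f k x) (k : Fin m) (x : Fin d → ℝ) :
    p k * f k x ≤ mixture p f x :=
  Finset.single_le_sum (fun k _ => term_nonneg hp hfnn k x) (Finset.mem_univ k)

lemma pair_le_mixture (hp : ∀ k, 0 < p k) (hfnn : ∀ k x, 0 ≤ f k x) {i j : Fin m}
    (hij : i ≠ j) (x : Fin d → ℝ) :
    p i * f i x + p j * f j x ≤ mixture p f x := by
  classical
  have := Finset.sum_le_sum_of_subset_of_nonneg (Finset.subset_univ ({i, j} : Finset (Fin m)))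
    (fun k _ _ => term_nonneg hp hfnn k x)
  rwa [Finset.sum_pair hij] at this

lemma mixture_measurable (hfmeas : ∀ k, Measurable (f k)) : Measurable (mixture p f) := by
  unfold mixture
  exact Finset.measurable_sum _ fun k _ => (hfmeas k).const_mul (p k)

lemma ghp_integrand_nonneg (hp : ∀ k, 0 < p k) (hfnn : ∀ k x, 0 ≤ f k x) (i j : Fin m)
    (x : Fin d → ℝ) : 0 ≤ p i * p j * f i x * f j x / mixture p f x :=
  div_nonneg (mul_nonneg (mul_nonneg (mul_nonneg (hp i).le (hp j).le) (hfnn i x)) (hfnn j x))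
    (mixture_nonneg hp hfnn x)

lemma ghp_integrand_le (hp : ∀ k, 0 < p k) (hfnn : ∀ k x, 0 ≤ f k x) (i j : Fin m)
    (x : Fin d → ℝ) : p i * p j * f i x * f j x / mixture p f x ≤ p i * f i x := by
  rcases eq_or_lt_of_le (mixture_nonneg hp hfnn x) with h | h
  · rw [← h, div_zero]; exact term_nonneg hp hfnn i x
  · rw [div_le_iff₀ h]
    calc p i * p j * f i x * f j x = (p i * f i x) * (p j * f j x) := by ring
      _ ≤ (p i * f i x) * mixture p f x :=
        mul_le_mul_of_nonneg_left (term_le_mixture hp hfnn j x) (term_nonneg hp hfnn i x)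

lemma pw_integrand_nonneg (hp : ∀ k, 0 < p k) (hfnn : ∀ k x, 0 ≤ f k x) (i j : Fin m)
    (x : Fin d → ℝ) : 0 ≤ p i * p j * f i x * f j x / (p i * f i x + p j * f j x) :=
  div_nonneg (mul_nonneg (mul_nonneg (mul_nonneg (hp i).le (hp j).le) (hfnn i x)) (hfnn j x))
    (add_nonneg (term_nonneg hp hfnn i x) (term_nonneg hp hfnn j x))

lemma pw_integrand_le (hp : ∀ k, 0 < p k) (hfnn : ∀ k x, 0 ≤ f k x) (i j : Fin m)
    (x : Fin d → ℝ) :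
    p i * p j * f i x * f j x / (p i * f i x + p j * f j x) ≤ p i * f i x := by
  have hd : 0 ≤ p i * f i x + p j * f j x :=
    add_nonneg (term_nonneg hp hfnn i x) (term_nonneg hp hfnn j x)
  rcases eq_or_lt_of_le hd with h | h
  · rw [← h, div_zero]; exact term_nonneg hp hfnn i x
  · rw [div_le_iff₀ h]
    calc p i * p j * f i x * f j x = (p i * f i x) * (p j * f j x) := by ring
      _ ≤ (p i * f i x) * (p i * f i x + p j * f j x) :=
        mul_le_mul_of_nonneg_left (le_add_of_nonneg_left (term_nonneg hp hfnn i x))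
          (term_nonneg hp hfnn i x)

lemma f_integrable (hfmeas : ∀ k, Measurable (f k))
    (hfint : ∀ k, ∫ x : Fin d → ℝ, f k x = 1) (k : Fin m) : Integrable (f k) := by
  by_contra h
  have hk := hfint k
  rw [integral_undef h] at hk
  exact one_ne_zero hk.symm

lemma ghp_integrable (hp : ∀ k, 0 < p k) (hfnn : ∀ k x, 0 ≤ f k x)
    (hfmeas : ∀ k, Measurable (f k)) (hfint : ∀ k, ∫ x : Fin d → ℝ, f k x = 1) (i j : Fin m) :
    Integrable (fun x : Fin d → ℝ => p i * p j * f i x * f j x / mixture p f x) := by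
  apply Integrable.mono' (((f_integrable hfmeas hfint i).const_mul (p i)))
  · exact ((by fun_prop : Measurable fun x : Fin d → ℝ => p i * p j * f i x * f j x).div
      (mixture_measurable hfmeas)).aestronglyMeasurable
  · filter_upwards with x
    rw [Real.norm_eq_abs, abs_of_nonneg (ghp_integrand_nonneg hp hfnn i j x)]
    exact ghp_integrand_le hp hfnn i j x

lemma pw_integrable (hp : ∀ k, 0 < p k) (hfnn : ∀ k x, 0 ≤ f k x)
    (hfmeas : ∀ k, Measurable (f k)) (hfint : ∀ k, ∫ x : Fin d → ℝ, f k x = 1) (i j : Fin m) :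
    Integrable (fun x : Fin d → ℝ =>
      p i * p j * f i x * f j x / (p i * f i x + p j * f j x)) := by
  apply Integrable.mono' (((f_integrable hfmeas hfint i).const_mul (p i)))
  · exact ((by fun_prop : Measurable fun x : Fin d → ℝ => p i * p j * f i x * f j x).div
      (by fun_prop : Measurable fun x : Fin d → ℝ => p i * f i x + p j * f j x)).aestronglyMeasurable
  · filter_upwards with x
    rw [Real.norm_eq_abs, abs_of_nonneg (pw_integrand_nonneg hp hfnn i j x)]
    exact pw_integrand_le hp hfnn i j x

lemma ghp_le_pw_pointwise (hp : ∀ k, 0 < p k) (hfnn : ∀ k x, 0 ≤ f k x) {i j : Fin m}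
    (hij : i ≠ j) (x : Fin d → ℝ) :
    p i * p j * f i x * f j x / mixture p f x ≤
      p i * p j * f i x * f j x / (p i * f i x + p j * f j x) := by
  have hd : 0 ≤ p i * f i x + p j * f j x :=
    add_nonneg (term_nonneg hp hfnn i x) (term_nonneg hp hfnn j x)
  rcases eq_or_lt_of_le hd with h | h
  · have hfi : f i x = 0 := by
      have h1 : p i * f i x = 0 := by
        have := term_nonneg hp hfnn j x
        have := term_nonneg hp hfnn i x
        linarith
      rcases mul_eq_zero.mp h1 with h' | h'
      · exact absurd h' (hp i).ne'
      · exact h'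
    simp [hfi]
  · exact div_le_div_of_nonneg_left
      (mul_nonneg (mul_nonneg (mul_nonneg (hp i).le (hp j).le) (hfnn i x)) (hfnn j x)) h
      (pair_le_mixture hp hfnn hij x)

/-- Key pointwise inequality: `f⁽ᵐ⁾(x) - max_k pₖ fₖ(x) ≤ 2 ∑_{i<j} pᵢpⱼfᵢfⱼ/f⁽ᵐ⁾`. -/
lemma key_pointwise (hm : 2 ≤ m) (hp : ∀ k, 0 < p k) (hfnn : ∀ k x, 0 ≤ f k x)
    (x : Fin d → ℝ) :
    mixture p f x - (⨆ k, p k * f k x) ≤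
      2 * ∑ i, ∑ j, (if i < j then p i * p j * f i x * f j x / mixture p f x else 0) := by
  have hne : Nonempty (Fin m) := ⟨⟨0, by omega⟩⟩
  set a : Fin m → ℝ := fun k => p k * f k x with ha
  have hank : ∀ k, 0 ≤ a k := fun k => term_nonneg hp hfnn k x
  have hbdd : BddAbove (Set.range a) := (Set.finite_range a).bddAbove
  have hS : mixture p f x = ∑ k, a k := rfl
  set M := ⨆ k, a k with hM
  have haM : ∀ k, a k ≤ M := fun k => le_ciSup hbdd k
  have hM0 : 0 ≤ M := le_trans (hank (Classical.arbitrary _)) (haM _)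
  have hMS : M ≤ mixture p f x := ciSup_le fun k => term_le_mixture hp hfnn k x
  rcases eq_or_lt_of_le (mixture_nonneg hp hfnn x) with h0 | h0
  · -- mixture = 0
    have : mixture p f x = 0 := h0.symm
    rw [this]
    simp only [div_zero, ite_self, Finset.sum_const_zero, mul_zero, zero_sub, neg_nonpos]
    exact le_trans (hank _) (haM (Classical.arbitrary _))
  · -- mixture > 0
    have hsq : ∑ k, (a k) ^ 2 ≤ M * mixture p f x := by
      rw [hS, Finset.mul_sum]
      refine Finset.sum_le_sum fun k _ => ?_
      rw [sq]
      exact mul_le_mul_of_nonneg_right (haM k) (hank k)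
    have hpair : (mixture p f x - M) * mixture p f x ≤
        2 * ∑ i, ∑ j, (if i < j then a i * a j else 0) := by
      have := sq_sum_eq_pairs a
      rw [← hS] at this
      nlinarith [hsq]
    rw [sub_le_iff_le_add]
    have h2 : mixture p f x - M ≤
        (2 * ∑ i, ∑ j, (if i < j then a i * a j else 0)) / mixture p f x := by
      rw [le_div_iff₀ h0]
      exact hpair
    have h3 : (2 * ∑ i, ∑ j, (if i < j then a i * a j else 0)) / mixture p f x =
        2 * ∑ i, ∑ j, (if i < j then p i * p j * f i x * f j x / mixture p f x else 0) := by
      rw [mul_div_assoc, Finset.sum_div]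
      congr 1
      refine Finset.sum_congr rfl fun i _ => ?_
      rw [Finset.sum_div]
      refine Finset.sum_congr rfl fun j _ => ?_
      split_ifs
      · rw [ha]; ring
      · exact zero_div _
    linarith [h2, h3 ▸ h2]

end Aux

theorem GHP_upper_tighter_than_pairwise_upper
    (m d : ℕ) (hm : 2 ≤ m) (hd : 1 ≤ d)
    (p : Fin m → ℝ) (hp : ∀ k, 0 < p k) (hp1 : ∑ k, p k = 1)
    (f : Fin m → (Fin d → ℝ) → ℝ)
    (hfmeas : ∀ k, Measurable (f k))
    (hfnn : ∀ k x, 0 ≤ f k x)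
    (hfint : ∀ k, ∫ x : Fin d → ℝ, f k x = 1) :
    bayesError p f ≤
        2 * ∑ i : Fin m, ∑ j : Fin m, (if i < j then deltaGHP p f i j else 0) ∧
      2 * ∑ i : Fin m, ∑ j : Fin m, (if i < j then deltaGHP p f i j else 0) ≤
        2 * ∑ i : Fin m, ∑ j : Fin m, (if i < j then deltaPW p f i j else 0) := by
  classical
  have hne : Nonempty (Fin m) := ⟨⟨0, by omega⟩⟩
  have hfI : ∀ k, Integrable (f k) := f_integrable hfmeas hfint
  have hmixI : Integrable (mixture p f) := by
    unfold mixture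
    exact integrable_finset_sum _ fun k _ => (hfI k).const_mul (p k)
  have hmix_int : ∫ x : Fin d → ℝ, mixture p f x = 1 := by
    unfold mixture
    rw [integral_finset_sum _ fun k _ => (hfI k).const_mul (p k)]
    simp only [integral_const_mul, hfint, mul_one, hp1]
  -- the supremum function
  set M : (Fin d → ℝ) → ℝ := fun x => ⨆ k, p k * f k x with hMdef
  have hMmeas : Measurable M := Measurable.iSup fun k => (hfmeas k).const_mul (p k)
  have hMnn : ∀ x, 0 ≤ M x := by
    intro x
    obtain ⟨k⟩ := hne
    calc (0:ℝ) ≤ p k * f k x := mul_nonneg (hp k).le (hfnn k x)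
      _ ≤ M x := le_ciSup (Set.Finite.bddAbove (Set.finite_range fun k => p k * f k x)) k
  have hMle : ∀ x, M x ≤ mixture p f x := fun x =>
    ciSup_le fun k => term_le_mixture hp hfnn k x
  have hMI : Integrable M := by
    apply Integrable.mono' hmixI hMmeas.aestronglyMeasurable
    filter_upwards with x
    rw [Real.norm_eq_abs, abs_of_nonneg (hMnn x)]
    exact hMle x
  -- GHP integrand family with the if
  set G : Fin m → Fin m → (Fin d → ℝ) → ℝ := fun i j x =>
    if i < j then p i * p j * f i x * f j x / mixture p f x else 0 with hGdef
  have hGI : ∀ i j : Fin m, Integrable (G i j) := by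
    intro i j
    rw [hGdef]
    by_cases h : i < j
    · simp only [if_pos h]
      exact ghp_integrable hp hfnn hfmeas hfint i j
    · simp only [if_neg h]
      exact integrable_zero _ _ _
  have hGint : ∀ i j : Fin m, ∫ x : Fin d → ℝ, G i j x =
      if i < j then deltaGHP p f i j else 0 := by
    intro i j
    rw [hGdef]
    by_cases h : i < j
    · simp only [if_pos h]; rfl
    · simp only [if_neg h, integral_zero]
  constructor
  · -- first inequality
    have hGsumI : Integrable (fun x => ∑ i : Fin m, ∑ j : Fin m, G i j x) :=
      integrable_finset_sum _ fun i _ => integrable_finset_sum _ fun j _ => hGI i j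
    have step : ∫ x : Fin d → ℝ, (mixture p f x - M x) ≤
        ∫ x : Fin d → ℝ, 2 * ∑ i : Fin m, ∑ j : Fin m, G i j x := by
      apply integral_mono (hmixI.sub hMI) (hGsumI.const_mul 2)
      intro x
      exact key_pointwise hm hp hfnn x
    have lhs_eq : ∫ x : Fin d → ℝ, (mixture p f x - M x) = 1 - ∫ x : Fin d → ℝ, M x := by
      rw [integral_sub hmixI hMI, hmix_int]
    have rhs_eq : ∫ x : Fin d → ℝ, 2 * ∑ i : Fin m, ∑ j : Fin m, G i j x =
        2 * ∑ i : Fin m, ∑ j : Fin m, (if i < j then deltaGHP p f i j else 0) := by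
      rw [integral_const_mul]
      congr 1
      rw [integral_finset_sum _ fun i _ => integrable_finset_sum _ fun j _ => hGI i j]
      refine Finset.sum_congr rfl fun i _ => ?_
      rw [integral_finset_sum _ fun j _ => hGI i j]
      exact Finset.sum_congr rfl fun j _ => hGint i j
    have : bayesError p f = 1 - ∫ x : Fin d → ℝ, M x := rfl
    rw [this, ← lhs_eq, ← rhs_eq]
    exact step
  · -- second inequality
    refine mul_le_mul_of_nonneg_left ?_ (by norm_num)
    refine Finset.sum_le_sum fun i _ => Finset.sum_le_sum fun j _ => ?_
    by_cases h : i < j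
    · simp only [if_pos h]
      exact integral_mono (ghp_integrable hp hfnn hfmeas hfint i j)
        (pw_integrable hp hfnn hfmeas hfint i j)
        (fun x => ghp_le_pw_pointwise hp hfnn h.ne x)
    · simp only [if_neg h]; exact le_refl 0
end

section
/- (Proposition 1: equality condition for the GHP and pairwise upper bounds.) Equality 2 Σ_{1≤i<j≤m} δ^m_ij = 2 Σ_{1≤i<j≤m} δ_ij holds if and only if either (a) m = 2, or (b) for every pair i ≠ j, f_i(x)·f_j(x)·Σ_{k≠i,j} p_k f_k(x) = 0 for Lebesgue-almost every x ∈ ℝ^d (equivalently, the support of f_i ∪ support of f_j is almost disjoint from the union of the supports of the f_k with k ≠ i, j). -/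
open MeasureTheory Finset

/-- The "rest" sum `R_{ij}(x) = ∑_{k ≠ i,j} pₖ fₖ(x)`. -/
noncomputable def restSum {m d : ℕ} (p : Fin m → ℝ) (f : Fin m → (Fin d → ℝ) → ℝ)
    (i j : Fin m) (x : Fin d → ℝ) : ℝ :=
  ∑ k ∈ Finset.univ.filter (fun k => k ≠ i ∧ k ≠ j), p k * f k x

lemma mixture_split {m d : ℕ} (p : Fin m → ℝ) (f : Fin m → (Fin d → ℝ) → ℝ)
    {i j : Fin m} (hij : i ≠ j) (x : Fin d → ℝ) :
    mixture p f x = (p i * f i x + p j * f j x) + restSum p f i j x := by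
  classical
  rw [mixture, restSum,
    ← Finset.sum_filter_add_sum_filter_not Finset.univ (fun k => k ≠ i ∧ k ≠ j)
      (fun k => p k * f k x)]
  have h1 : Finset.univ.filter (fun k => ¬(k ≠ i ∧ k ≠ j)) = ({i, j} : Finset (Fin m)) := by
    ext k
    simp [not_and_or, or_comm, em, Finset.mem_insert]
    tauto
  rw [h1, Finset.sum_pair hij]
  ring

lemma restSum_nonneg {m d : ℕ} {p : Fin m → ℝ} (hp : ∀ k, 0 < p k)
    {f : Fin m → (Fin d → ℝ) → ℝ} (hfnn : ∀ k x, 0 ≤ f k x)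
    (i j : Fin m) (x : Fin d → ℝ) : 0 ≤ restSum p f i j x :=
  Finset.sum_nonneg fun k _ => mul_nonneg (hp k).le (hfnn k x)

lemma quot_le_of_le {a b D : ℝ} (ha : 0 ≤ a) (hb : 0 ≤ b) (hD : a ≤ D) :
    a * b / D ≤ b := by
  rcases eq_or_lt_of_le (ha.trans hD) with h | h
  · rw [← h, div_zero]; exact hb
  · rw [div_le_iff₀ h]
    calc a * b ≤ D * b := mul_le_mul_of_nonneg_right hD hb
    _ = b * D := mul_comm _ _

lemma integrable_of_int_one {d : ℕ} (g : (Fin d → ℝ) → ℝ)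
    (h : ∫ x : Fin d → ℝ, g x = 1) : Integrable g := by
  by_contra hc
  rw [integral_undef hc] at h
  exact one_ne_zero h.symm

/-- Pointwise characterization of equality of the two integrands. -/
lemma pointwise_iff {m d : ℕ} {p : Fin m → ℝ} (hp : ∀ k, 0 < p k)
    {f : Fin m → (Fin d → ℝ) → ℝ} (hfnn : ∀ k x, 0 ≤ f k x)
    {i j : Fin m} (hij : i ≠ j) (x : Fin d → ℝ) :
    (p i * p j * f i x * f j x / mixture p f x =
      p i * p j * f i x * f j x / (p i * f i x + p j * f j x)) ↔
    f i x * f j x * restSum p f i j x = 0 := by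
  have hM := mixture_split p f hij x
  have hR := restSum_nonneg hp hfnn i j x
  constructor
  · intro h
    by_contra hne
    have hfi : 0 < f i x := by
      rcases (hfnn i x).lt_or_eq with h' | h'
      · exact h'
      · exact absurd (by rw [← h']; ring) hne
    have hfj : 0 < f j x := by
      rcases (hfnn j x).lt_or_eq with h' | h'
      · exact h'
      · exact absurd (by rw [← h']; ring) hne
    have hRpos : 0 < restSum p f i j x := by
      rcases hR.lt_or_eq with h' | h'
      · exact h'
      · exact absurd (by rw [← h']; ring) hne
    have hpi := hp i
    have hpj := hp j
    have hN : 0 < p i * p j * f i x * f j x := by positivity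
    have hS : 0 < p i * f i x + p j * f j x := by positivity
    have hSM : p i * f i x + p j * f j x < mixture p f x := by
      rw [hM]; linarith
    have : p i * p j * f i x * f j x / mixture p f x <
        p i * p j * f i x * f j x / (p i * f i x + p j * f j x) :=
      div_lt_div_of_pos_left hN hS hSM
    exact absurd h this.ne
  · intro h
    rcases mul_eq_zero.1 h with h' | hR0
    · rcases mul_eq_zero.1 h' with h0 | h0 <;> · rw [h0]; ring_nf
    · rw [hM, hR0, add_zero]

/-- The GHP integrand is bounded pointwise by the pairwise integrand. -/
lemma integrand_le {m d : ℕ} {p : Fin m → ℝ} (hp : ∀ k, 0 < p k)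
    {f : Fin m → (Fin d → ℝ) → ℝ} (hfnn : ∀ k x, 0 ≤ f k x)
    {i j : Fin m} (hij : i ≠ j) (x : Fin d → ℝ) :
    p i * p j * f i x * f j x / mixture p f x ≤
      p i * p j * f i x * f j x / (p i * f i x + p j * f j x) := by
  have hM := mixture_split p f hij x
  have hR := restSum_nonneg hp hfnn i j x
  have hpi := hp i
  have hpj := hp j
  have hfi' := hfnn i x
  have hfj' := hfnn j x
  have hS : 0 ≤ p i * f i x + p j * f j x := by positivity
  rcases hS.lt_or_eq with hSpos | hS0
  · have hSM : p i * f i x + p j * f j x ≤ mixture p f x := by rw [hM]; linarith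
    gcongr
  · have hfi : f i x = 0 := by nlinarith [hp i, hp j, hfnn i x, hfnn j x]
    rw [hfi]
    simp

lemma measurable_mixture {m d : ℕ} (p : Fin m → ℝ) {f : Fin m → (Fin d → ℝ) → ℝ}
    (hfmeas : ∀ k, Measurable (f k)) : Measurable (mixture p f) := by
  unfold mixture
  exact Finset.measurable_sum _ fun k _ => (hfmeas k).const_mul (p k)

lemma integrable_quot {m d : ℕ} {p : Fin m → ℝ} (hp : ∀ k, 0 < p k)
    {f : Fin m → (Fin d → ℝ) → ℝ} (hfmeas : ∀ k, Measurable (f k))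
    (hfnn : ∀ k x, 0 ≤ f k x) (hfint : ∀ k, ∫ x : Fin d → ℝ, f k x = 1)
    (i j : Fin m) (D : (Fin d → ℝ) → ℝ) (hD : Measurable D)
    (hDle : ∀ x, p i * f i x ≤ D x) :
    Integrable (fun x => p i * p j * f i x * f j x / D x) := by
  have hb : Integrable (fun x => p j * f j x) :=
    (integrable_of_int_one (f j) (hfint j)).const_mul (p j)
  refine hb.mono' ?_ (ae_of_all _ fun x => ?_)
  · exact ((((hfmeas i).const_mul (p i * p j)).mul (hfmeas j)).div hD).aestronglyMeasurable
  · have hpi := hp i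
    have hpj := hp j
    have hfi' := hfnn i x
    have hfj' := hfnn j x
    have h1 : 0 ≤ p i * p j * f i x * f j x / D x := by
      apply div_nonneg
      · positivity
      · exact le_trans (by positivity) (hDle x)
    rw [Real.norm_eq_abs, abs_of_nonneg h1]
    have : (p i * f i x) * (p j * f j x) / D x ≤ p j * f j x :=
      quot_le_of_le (by positivity) (by positivity) (hDle x)
    calc p i * p j * f i x * f j x / D x
        = (p i * f i x) * (p j * f j x) / D x := by ring_nf
      _ ≤ p j * f j x := this

lemma restSum_symm {m d : ℕ} (p : Fin m → ℝ) (f : Fin m → (Fin d → ℝ) → ℝ)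
    (i j : Fin m) (x : Fin d → ℝ) : restSum p f i j x = restSum p f j i x := by
  unfold restSum
  apply Finset.sum_congr _ fun _ _ => rfl
  ext k
  simp [and_comm]

theorem GHP_pairwise_upper_equality_iff
    (m d : ℕ) (hm : 2 ≤ m) (hd : 1 ≤ d)
    (p : Fin m → ℝ) (hp : ∀ k, 0 < p k) (hp1 : ∑ k, p k = 1)
    (f : Fin m → (Fin d → ℝ) → ℝ)
    (hfmeas : ∀ k, Measurable (f k))
    (hfnn : ∀ k x, 0 ≤ f k x)
    (hfint : ∀ k, ∫ x : Fin d → ℝ, f k x = 1) :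
    (2 * ∑ i : Fin m, ∑ j : Fin m, (if i < j then deltaGHP p f i j else 0) =
        2 * ∑ i : Fin m, ∑ j : Fin m, (if i < j then deltaPW p f i j else 0)) ↔
      (m = 2 ∨
        ∀ i j : Fin m, i ≠ j →
          ∀ᵐ x : Fin d → ℝ,
            f i x * f j x *
              (∑ k ∈ Finset.univ.filter (fun k => k ≠ i ∧ k ≠ j), p k * f k x) = 0) := by
  classical
  -- integrability of the two integrands
  have hintG : ∀ i j : Fin m, i ≠ j →
      Integrable (fun x : Fin d → ℝ => p i * p j * f i x * f j x / mixture p f x) := by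
    intro i j hij
    refine integrable_quot hp hfmeas hfnn hfint i j _ (measurable_mixture p hfmeas) fun x => ?_
    rw [mixture_split p f hij x]
    have := restSum_nonneg hp hfnn i j x
    nlinarith [hp j, hfnn j x]
  have hintP : ∀ i j : Fin m, i ≠ j →
      Integrable (fun x : Fin d → ℝ =>
        p i * p j * f i x * f j x / (p i * f i x + p j * f j x)) := by
    intro i j hij
    refine integrable_quot hp hfmeas hfnn hfint i j _
      (((hfmeas i).const_mul _).add ((hfmeas j).const_mul _)) fun x => ?_
    nlinarith [hp j, hfnn j x]
  -- monotonicity of integrals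
  have mono : ∀ i j : Fin m, i ≠ j → deltaGHP p f i j ≤ deltaPW p f i j := by
    intro i j hij
    exact integral_mono (hintG i j hij) (hintP i j hij) (integrand_le hp hfnn hij)
  -- key : equality of deltas iff a.e. condition
  have key : ∀ i j : Fin m, i ≠ j →
      (deltaGHP p f i j = deltaPW p f i j ↔
        ∀ᵐ x : Fin d → ℝ, f i x * f j x * restSum p f i j x = 0) := by
    intro i j hij
    rw [deltaGHP, deltaPW]
    set g := fun x : Fin d → ℝ => p i * p j * f i x * f j x / mixture p f x with hg
    set h := fun x : Fin d → ℝ =>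
      p i * p j * f i x * f j x / (p i * f i x + p j * f j x) with hh
    have hsub : Integrable (fun x => h x - g x) := (hintP i j hij).sub (hintG i j hij)
    constructor
    · intro heq
      have hz : ∫ x, (h x - g x) = 0 := by
        rw [integral_sub (hintP i j hij) (hintG i j hij), heq, sub_self]
      have := (integral_eq_zero_iff_of_nonneg_ae
        (ae_of_all _ fun x => sub_nonneg.2 (integrand_le hp hfnn hij x)) hsub).1 hz
      filter_upwards [this] with x hx
      have : g x = h x := by
        have : h x - g x = 0 := hx
        linarith
      exact (pointwise_iff hp hfnn hij x).1 this
    · intro hae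
      apply integral_congr_ae
      filter_upwards [hae] with x hx
      exact (pointwise_iff hp hfnn hij x).2 hx
  -- reduce the doubled sums
  have termle : ∀ i j : Fin m,
      (if i < j then deltaGHP p f i j else 0) ≤ (if i < j then deltaPW p f i j else 0) := by
    intro i j
    split
    · exact mono i j (ne_of_lt ‹_›)
    · exact le_refl _
  have step1 : (2 * ∑ i : Fin m, ∑ j : Fin m, (if i < j then deltaGHP p f i j else 0) =
        2 * ∑ i : Fin m, ∑ j : Fin m, (if i < j then deltaPW p f i j else 0)) ↔
      ∀ i j : Fin m, i < j → deltaGHP p f i j = deltaPW p f i j := by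
    constructor
    · intro h2 i j hij
      have h : (∑ i : Fin m, ∑ j : Fin m, (if i < j then deltaGHP p f i j else 0)) =
          ∑ i : Fin m, ∑ j : Fin m, (if i < j then deltaPW p f i j else 0) := by
        linarith
      have h1 := (Finset.sum_eq_sum_iff_of_le
        (fun i _ => Finset.sum_le_sum fun j _ => termle i j)).1 h i (Finset.mem_univ i)
      have h2' := (Finset.sum_eq_sum_iff_of_le
        (fun j _ => termle i j)).1 h1 j (Finset.mem_univ j)
      simpa [hij] using h2'
    · intro h
      have : (∑ i : Fin m, ∑ j : Fin m, (if i < j then deltaGHP p f i j else 0)) =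
          ∑ i : Fin m, ∑ j : Fin m, (if i < j then deltaPW p f i j else 0) := by
        refine Finset.sum_congr rfl fun i _ => Finset.sum_congr rfl fun j _ => ?_
        split
        · exact h i j ‹_›
        · rfl
      rw [this]
  rw [step1]
  -- symmetry of the condition
  have condSymm : ∀ i j : Fin m,
      (∀ᵐ x : Fin d → ℝ, f i x * f j x * restSum p f i j x = 0) →
      (∀ᵐ x : Fin d → ℝ, f j x * f i x * restSum p f j i x = 0) := by
    intro i j h
    filter_upwards [h] with x hx
    rw [← restSum_symm, mul_comm (f j x) (f i x)]
    exact hx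
  constructor
  · intro h
    right
    intro i j hij
    show ∀ᵐ x : Fin d → ℝ, f i x * f j x * restSum p f i j x = 0
    rcases lt_or_gt_of_ne hij with hlt | hgt
    · exact (key i j hij).1 (h i j hlt)
    · exact condSymm j i ((key j i hij.symm).1 (h j i hgt))
  · rintro (hm2 | hb)
    · -- m = 2 : the rest sum is empty
      intro i j hij
      refine (key i j (ne_of_lt hij)).2 ?_
      have hempty : Finset.univ.filter (fun k => k ≠ i ∧ k ≠ j) = (∅ : Finset (Fin m)) := by
        rw [Finset.filter_eq_empty_iff]
        intro k _
        rintro ⟨hki, hkj⟩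
        have h1 : k.val ≠ i.val := fun h => hki (Fin.ext h)
        have h2 : k.val ≠ j.val := fun h => hkj (Fin.ext h)
        have h3 : i.val ≠ j.val := fun h => (ne_of_lt hij) (Fin.ext h)
        have := k.isLt
        have := i.isLt
        have := j.isLt
        omega
      refine ae_of_all _ fun x => ?_
      rw [restSum, hempty, Finset.sum_empty, mul_zero]
    · intro i j hij
      exact (key i j (ne_of_lt hij)).2 (hb i j (ne_of_lt hij))
end
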